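/- arXiv:1610.07907 — 16 statements merged into one kernel-verified Lean document; each statement's English description precedes it below -/
import Mathlib

section
/- If A_1, ..., A_m and B_1, ..., B_m are subsets of [n] such that |A_i ∩ B_i| is odd for every i, and |A_i ∩ B_j| is even whenever i < j, then m ≤ n. -/
/-- Skew oddtown theorem. -/
theorem skew_oddtown (n m : ℕ) (A B : Fin m → Finset (Fin n))
    (hodd : ∀ i, Odd ((A i) ∩ (B i)).card)
    (heven : ∀ i j : Fin m, i < j → Even ((A i) ∩ (B j)).card) :
    m ≤ n := by
  classical
  set v : Fin m → (Fin n → ZMod 2) :=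
    fun i x => if x ∈ A i then (1 : ZMod 2) else 0 with hv
  have hpair : ∀ j i : Fin m,
      (∑ x, v j x * (if x ∈ B i then (1 : ZMod 2) else 0))
        = ((A j ∩ B i).card : ZMod 2) := by
    intro j i
    have : (∑ x, v j x * (if x ∈ B i then (1 : ZMod 2) else 0))
        = ∑ x, (if x ∈ A j ∩ B i then (1 : ZMod 2) else 0) := by
      apply Finset.sum_congr rfl
      intro x _
      by_cases h1 : x ∈ A j <;> by_cases h2 : x ∈ B i <;>
        simp [hv, h1, h2, Finset.mem_inter]
    rw [this, Finset.sum_ite_mem, Finset.univ_inter, Finset.sum_const, nsmul_eq_mul, mul_one]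
  have hcast_even : ∀ k : ℕ, Even k → (k : ZMod 2) = 0 := by
    intro k ⟨r, hr⟩
    subst hr; push_cast; ring_nf
    simp [show ((2:ZMod 2)) = 0 from rfl]
  have hcast_odd : ∀ k : ℕ, Odd k → (k : ZMod 2) = 1 := by
    intro k ⟨r, hr⟩
    subst hr; push_cast
    simp [show ((2:ZMod 2)) = 0 from rfl]
  have hli : LinearIndependent (ZMod 2) v := by
    rw [Fintype.linearIndependent_iff]
    intro c hc
    by_contra h
    push_neg at h
    obtain ⟨i0, hi0⟩ := h
    set S : Finset (Fin m) := Finset.univ.filter (fun i => c i ≠ 0) with hS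
    have hSne : S.Nonempty := ⟨i0, by simp [hS, hi0]⟩
    set i := S.max' hSne with hi
    have hiS : i ∈ S := S.max'_mem hSne
    have hci : c i ≠ 0 := (Finset.mem_filter.mp hiS).2
    have key := congrArg (fun f : Fin n → ZMod 2 =>
      ∑ x, f x * (if x ∈ B i then (1 : ZMod 2) else 0)) hc
    simp only [Pi.zero_apply, zero_mul, Finset.sum_const_zero] at key
    have hsum : (∑ x, (∑ j, c j • v j) x * (if x ∈ B i then (1 : ZMod 2) else 0))
        = ∑ j, c j * ((A j ∩ B i).card : ZMod 2) := by
      simp only [Finset.sum_apply, Pi.smul_apply, smul_eq_mul, Finset.sum_mul]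
      rw [Finset.sum_comm]
      apply Finset.sum_congr rfl
      intro j _
      rw [← hpair j i, Finset.mul_sum]
      apply Finset.sum_congr rfl
      intro x _; ring
    rw [hsum] at key
    have hterm : ∀ j ∈ Finset.univ, j ≠ i →
        c j * ((A j ∩ B i).card : ZMod 2) = 0 := by
      intro j _ hj
      rcases lt_or_gt_of_ne hj with hlt | hgt
      · rw [hcast_even _ (heven j i hlt), mul_zero]
      · have : c j = 0 := by
          by_contra hcj
          have : j ∈ S := by simp [hS, hcj]
          exact absurd (S.le_max' j this) (not_le.mpr hgt)
        rw [this, zero_mul]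
    rw [Finset.sum_eq_single_of_mem i (Finset.mem_univ i) hterm,
      hcast_odd _ (hodd i), mul_one] at key
    exact hci key
  have := hli.fintype_card_le_finrank
  simpa using this
end

section
/- If A_1, ..., A_m are distinct subsets of [n] such that |A_i| is odd for every i and |A_i ∩ A_j| is even for all i ≠ j, then m ≤ n. -/
lemma natCast_zmod2_even {k : ℕ} (h : Even k) : (k : ZMod 2) = 0 := by
  obtain ⟨t, ht⟩ := h; subst ht; push_cast; ring_nf
  simp [show ((2:ZMod 2)) = 0 from rfl]

lemma natCast_zmod2_odd {k : ℕ} (h : Odd k) : (k : ZMod 2) = 1 := by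
  obtain ⟨t, ht⟩ := h; subst ht; push_cast
  simp [show ((2:ZMod 2)) = 0 from rfl]

/-- Berlekamp's oddtown theorem. -/
theorem oddtown (n m : ℕ) (A : Fin m → Finset (Fin n))
    (hinj : Function.Injective A)
    (hodd : ∀ i, Odd ((A i)).card)
    (heven : ∀ i j : Fin m, i ≠ j → Even ((A i) ∩ (A j)).card) :
    m ≤ n := by
  classical
  set v : Fin m → (Fin n → ZMod 2) := fun i x => if x ∈ A i then 1 else 0 with hv
  have hdot : ∀ i j, (∑ x, v i x * v j x) = ((A i ∩ A j).card : ZMod 2) := by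
    intro i j
    have h1 : ∀ x, v i x * v j x = if x ∈ A i ∩ A j then (1 : ZMod 2) else 0 := by
      intro x
      simp only [hv, Finset.mem_inter]
      by_cases h1 : x ∈ A i <;> by_cases h2 : x ∈ A j <;> simp [h1, h2]
    rw [Finset.sum_congr rfl fun x _ => h1 x, Finset.sum_ite_mem, Finset.univ_inter]
    simp
  have hli : LinearIndependent (ZMod 2) v := by
    rw [Fintype.linearIndependent_iff]
    intro c hc j
    have h0 : (∑ x, (∑ i, c i * v i x) * v j x) = 0 := by
      have hx : ∀ x, (∑ i, c i * v i x) = 0 := by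
        intro x
        have := congrFun hc x
        simpa [Finset.sum_apply] using this
      simp [hx]
    simp_rw [Finset.sum_mul] at h0
    rw [Finset.sum_comm] at h0
    have h1 : ∀ i, (∑ x, c i * v i x * v j x) = c i * ((A i ∩ A j).card : ZMod 2) := by
      intro i
      simp_rw [mul_assoc, ← Finset.mul_sum, hdot]
    rw [Finset.sum_congr rfl fun i _ => h1 i] at h0
    rw [Finset.sum_eq_single j (fun i _ hij => by
      rw [natCast_zmod2_even (heven i j hij), mul_zero]) (by simp)] at h0
    rwa [Finset.inter_self, natCast_zmod2_odd (hodd j), mul_one] at h0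
  have := hli.fintype_card_le_finrank
  simpa using this
end

section
/- Let ℓ be a prime. If A_1, ..., A_m are distinct subsets of [n] such that |A_i| is not divisible by ℓ for every i and |A_i ∩ A_j| is divisible by ℓ for all i ≠ j, then m ≤ n. -/
/-- The ℓ-oddtown theorem for prime ℓ. -/
theorem ell_oddtown (ℓ n m : ℕ) (hℓ : ℓ.Prime) (A : Fin m → Finset (Fin n))
    (hinj : Function.Injective A)
    (hsize : ∀ i, ¬ ℓ ∣ ((A i)).card)
    (hint : ∀ i j : Fin m, i ≠ j → ℓ ∣ ((A i) ∩ (A j)).card) :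
    m ≤ n := by
  haveI : Fact ℓ.Prime := ⟨hℓ⟩
  set v : Fin m → (Fin n → ZMod ℓ) :=
    fun i x => if x ∈ A i then 1 else 0 with hv
  have hdot : ∀ i j, (∑ x, v i x * v j x) = ((A i ∩ A j).card : ZMod ℓ) := by
    intro i j
    have : ∀ x : Fin n, v i x * v j x = if x ∈ A i ∩ A j then 1 else 0 := by
      intro x
      simp only [hv, Finset.mem_inter]
      by_cases h1 : x ∈ A i <;> by_cases h2 : x ∈ A j <;> simp [h1, h2]
    simp only [this, Finset.sum_ite_mem, Finset.univ_inter]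
    simp
  have hli : LinearIndependent (ZMod ℓ) v := by
    rw [Fintype.linearIndependent_iff]
    intro c hc j
    have := congrArg (fun f => ∑ x, f x * v j x) hc
    simp only [Finset.sum_apply, Pi.smul_apply, smul_eq_mul, Pi.zero_apply,
      Finset.sum_mul, zero_mul, Finset.sum_const_zero] at this
    rw [Finset.sum_comm] at this
    have key : (∑ i, c i * ∑ x, v i x * v j x) = 0 := by
      rw [← this]
      congr 1; ext i
      rw [Finset.mul_sum]
      congr 1; ext x; ring
    simp only [hdot] at key
    rw [Finset.sum_eq_single j] at key
    · have hne : ((A j ∩ A j).card : ZMod ℓ) ≠ 0 := by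
        rw [Finset.inter_self, Ne, ZMod.natCast_eq_zero_iff]
        exact hsize j
      exact (mul_eq_zero.mp key).resolve_right hne
    · intro i _ hij
      have : ((A i ∩ A j).card : ZMod ℓ) = 0 := by
        rw [ZMod.natCast_eq_zero_iff]
        exact hint i j hij
      rw [this, mul_zero]
    · intro h; exact absurd (Finset.mem_univ j) h
  have := hli.fintype_card_le_finrank
  simpa using this
end

section
/- Let ℓ be a prime and let v_1, ..., v_t be t distinct vectors in F_ℓ^n all of whose coordinates are 0 or 1. Then the dimension of the span of {v_1, ..., v_t} over F_ℓ is at least ⌈log₂ t⌉. -/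
/-!
A subspace `W` of `K^n` is determined by at most `dim W` of its coordinates: the coordinate
functionals span `W*`, so some `dim W` of them already span it. Two {0,1}-vectors of `W` that
agree on those coordinates are therefore equal, so `W` contains at most `2 ^ dim W` of them.
-/

open Module

theorem Module.Dual.exists_finset_card_le_finrank_determining {K V ι : Type*} [Field K]
    [AddCommGroup V] [Module K V] [FiniteDimensional K V] (φ : ι → Dual K V) :
    ∃ s : Finset ι, s.card ≤ finrank K V ∧
      ∀ x y, (∀ i ∈ s, φ i x = φ i y) → ∀ i, φ i x = φ i y := by
  obtain ⟨b, -, -, hspan, hli⟩ :=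
    exists_linearIndepOn_extension (linearIndepOn_empty K φ) (Set.subset_univ _)
  have : Finite b := hli.finite
  have : Fintype b := Fintype.ofFinite b
  refine ⟨b.toFinset, ?_, fun x y hxy i => ?_⟩
  · simpa [Subspace.dual_finrank_eq] using hli.fintype_card_le_finrank
  · have hker : Submodule.span K (φ '' b) ≤ LinearMap.ker (Dual.eval K V x - Dual.eval K V y) := by
      rw [Submodule.span_le]
      rintro _ ⟨j, hj, rfl⟩
      simpa [sub_eq_zero] using hxy j (by simpa using hj)
    simpa [sub_eq_zero] using hker (hspan ⟨i, trivial, rfl⟩)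

theorem Submodule.exists_finset_card_le_finrank_eq_of_eqOn {K ι : Type*} [Field K] [Finite ι]
    (W : Submodule K (ι → K)) :
    ∃ s : Finset ι, s.card ≤ finrank K W ∧
      ∀ x ∈ W, ∀ y ∈ W, Set.EqOn x y s → x = y := by
  obtain ⟨s, hs, hdet⟩ :=
    Dual.exists_finset_card_le_finrank_determining fun i => (LinearMap.proj i).comp W.subtype
  exact ⟨s, hs, fun x hx y hy hxy =>
    funext (hdet ⟨x, hx⟩ ⟨y, hy⟩ fun i hi => hxy hi)⟩

theorem card_le_two_pow_of_injective_of_forall_eq_zero_or_eq_one {α σ R : Type*} [Fintype α]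
    [Fintype σ] [Zero R] [One R] (f : α → σ → R) (hf : Function.Injective f)
    (h01 : ∀ a j, f a j = 0 ∨ f a j = 1) :
    Fintype.card α ≤ 2 ^ Fintype.card σ := by
  classical
  have hinj : Function.Injective fun a j => decide (f a j = 1) := by
    refine fun a a' h => hf (funext fun j => ?_)
    have hj : f a j = 1 ↔ f a' j = 1 := by simpa using congrFun h j
    rcases h01 a j with ha | ha <;> rcases h01 a' j with ha' | ha' <;> simp_all
  simpa using Fintype.card_le_of_injective _ hinj

/-- Odlyzko's theorem: t distinct {0,1}-vectors in F_ℓ^n contain ⌈log₂ t⌉ linearly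
independent ones, i.e. their span has dimension at least ⌈log₂ t⌉. -/
theorem odlyzko (ℓ n t : ℕ) [Fact ℓ.Prime] (v : Fin t → (Fin n → ZMod ℓ))
    (hinj : Function.Injective v)
    (h01 : ∀ i j, v i j = 0 ∨ v i j = 1) :
    Nat.clog 2 t ≤ Module.finrank (ZMod ℓ) ↥(Submodule.span (ZMod ℓ) (Set.range v)) := by
  set W := Submodule.span (ZMod ℓ) (Set.range v)
  have hmem (i : Fin t) : v i ∈ W := Submodule.subset_span ⟨i, rfl⟩
  obtain ⟨s, hs, hdet⟩ := W.exists_finset_card_le_finrank_eq_of_eqOn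
  have hrestrict : Function.Injective fun i (j : s) => v i j := fun i i' h =>
    hinj (hdet _ (hmem i) _ (hmem i') fun j hj => congrFun h ⟨j, hj⟩)
  have ht : t ≤ 2 ^ s.card := by
    simpa using card_le_two_pow_of_injective_of_forall_eq_zero_or_eq_one _ hrestrict
      fun i j => h01 i j
  exact (Nat.clog_le_iff_le_pow one_lt_two).2 (ht.trans (Nat.pow_le_pow_right two_pos hs))
end

section
/- Let ℓ be prime, let W be a subspace of F_ℓ^n on which the standard bilinear form is non-degenerate, and let b_1, ..., b_t be distinct {0,1}-vectors in W such that (b_1·b_1)(b_i·b_j) = (b_1·b_i)(b_1·b_j) ≠ 0 for all i, j ∈ [t]. Then dim W ≥ 2⌈log₂(t+1)⌉ − 1. -/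
/-!
Put `e = b₁`. The rank-one condition on the Gram matrix makes every `uⱼ = bⱼ - (e·bⱼ / e·e) e`
orthogonal to all `bᵢ`, so `U = span {uⱼ}` is orthogonal to `S = span {bᵢ}`, while
`S ≤ span {e} ⊔ U`. Non-degeneracy of `W` gives `dim S + dim U ≤ dim W`, hence
`2 dim S - 1 ≤ dim W`. Finally `0` and the `t` distinct nonzero `{0,1}`-vectors `bᵢ` lie in `S`,
and a `k`-dimensional subspace of `F^n` contains at most `2^k` vectors with entries in `{0,1}`,
because it maps injectively onto `F^J` for some set `J` of `k` coordinates.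
Thus `t + 1 ≤ 2 ^ dim S`.
-/

open Module Submodule

variable {F : Type*} [Field F]

section ZeroOneVectors

variable {ι : Type*} [Fintype ι]

theorem Submodule.exists_finset_card_eq_finrank_separating (S : Submodule F (ι → F)) :
    ∃ J : Finset ι, J.card = finrank F S ∧ ∀ x ∈ S, (∀ j ∈ J, x j = 0) → x = 0 := by
  let φ : ι → Dual F S := fun j => (LinearMap.proj j).comp S.subtype
  have hspan : span F (Set.range φ) = ⊤ := by
    refine eq_top_iff'.2 fun f => mem_span_of_iInf_ker_le_ker fun x hx => ?_
    have hx0 : x = 0 := Subtype.ext <| funext fun j => (mem_iInf _).1 hx j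
    simp [hx0]
  obtain ⟨κ, a, ha, hspan_a, hli⟩ := exists_linearIndependent' F φ
  have : Finite κ := Finite.of_injective a ha
  have := Fintype.ofFinite κ
  refine ⟨Finset.univ.map ⟨a, ha⟩, ?_, fun x hx hJ => ?_⟩
  · rw [Finset.card_map, Finset.card_univ, ← finrank_span_eq_card hli, hspan_a, hspan,
      finrank_top, Subspace.dual_finrank_eq]
  · suffices (⟨x, hx⟩ : S) = 0 from congrArg Subtype.val this
    refine (forall_dual_apply_eq_zero_iff F _).1 fun f => ?_
    have hker : span F (Set.range (φ ∘ a)) ≤ LinearMap.ker (Dual.eval F S ⟨x, hx⟩) :=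
      span_le.2 <| Set.range_subset_iff.2 fun c => hJ (a c) (by simp)
    exact hker (hspan_a ▸ hspan ▸ mem_top : f ∈ span F (Set.range (φ ∘ a)))

theorem Submodule.card_le_two_pow_finrank_of_zero_one (S : Submodule F (ι → F))
    (s : Finset (ι → F)) (hsS : ∀ x ∈ s, x ∈ S) (h01 : ∀ x ∈ s, ∀ j, x j = 0 ∨ x j = 1) :
    s.card ≤ 2 ^ finrank F S := by
  classical
  obtain ⟨J, hJ, hsep⟩ := S.exists_finset_card_eq_finrank_separating
  let r : (ι → F) → (J → F) := fun x j => x j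
  have hr : Set.InjOn r s := fun x hx y hy hxy => sub_eq_zero.1 <|
    hsep _ (S.sub_mem (hsS x hx) (hsS y hy)) fun j hj => sub_eq_zero.2 (congrFun hxy ⟨j, hj⟩)
  calc s.card ≤ (Fintype.piFinset fun _ : J => ({0, 1} : Finset F)).card :=
        Finset.card_le_card_of_injOn r (fun x hx => by simpa [r] using fun j _ => h01 x hx j) hr
    _ = 2 ^ finrank F S := by
        rw [Fintype.card_piFinset, Finset.prod_const, Finset.card_pair zero_ne_one,
          Finset.card_univ, Fintype.card_coe, hJ]

theorem add_one_le_two_pow_finrank_span {κ : Type*} [Fintype κ] {b : κ → ι → F}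
    (hinj : Function.Injective b) (hne : ∀ i, b i ≠ 0) (h01 : ∀ i j, b i j = 0 ∨ b i j = 1) :
    Fintype.card κ + 1 ≤ 2 ^ finrank F (span F (Set.range b)) := by
  classical
  have h0 : (0 : ι → F) ∉ Finset.univ.image b := by simpa [eq_comm] using hne
  calc Fintype.card κ + 1 = (insert 0 (Finset.univ.image b)).card := by
        rw [Finset.card_insert_of_notMem h0, Finset.card_image_of_injective _ hinj,
          Finset.card_univ]
    _ ≤ _ := by
        refine (span F (Set.range b)).card_le_two_pow_finrank_of_zero_one _ ?_ ?_ <;>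
          simp only [Finset.mem_insert, Finset.mem_image, Finset.mem_univ, true_and] <;>
          rintro _ (rfl | ⟨i, rfl⟩)
        · exact zero_mem _
        · exact subset_span ⟨i, rfl⟩
        · simp
        · exact h01 i

end ZeroOneVectors

namespace LinearMap.BilinForm

variable {V : Type*} [AddCommGroup V] [Module F V] (B : LinearMap.BilinForm F V)

theorem span_range_le_orthogonal_span_range {κ κ' : Type*} {x : κ → V} {y : κ' → V}
    (h : ∀ i j, B (x i) (y j) = 0) :
    span F (Set.range y) ≤ B.orthogonal (span F (Set.range x)) :=
  span_le.2 <| Set.range_subset_iff.2 fun j _ hn =>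
    (span_le (p := LinearMap.ker (B.flip (y j))).2
      (Set.range_subset_iff.2 fun i => h i j)) hn

theorem finrank_add_finrank_le_of_le_orthogonal {W S U : Submodule F V} [FiniteDimensional F W]
    (hW : ∀ w ∈ W, w ≠ 0 → ∃ v ∈ W, B w v ≠ 0) (hSW : S ≤ W) (hUW : U ≤ W)
    (hSU : U ≤ B.orthogonal S) :
    finrank F S + finrank F U ≤ finrank F W := by
  let B' := B.restrict W
  have hker : B'.ker = ⊥ := by
    refine eq_bot_iff.2 fun w hw => (mem_bot F).2 <| by_contra fun hw0 => ?_
    obtain ⟨v, hvW, hv⟩ := hW w w.2 fun h => hw0 (Subtype.ext h)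
    exact hv (LinearMap.congr_fun hw ⟨v, hvW⟩)
  have hU' : U.comap W.subtype ≤ B'.orthogonal (S.comap W.subtype) :=
    fun u hu n hn => hSU hu n hn
  have key := finrank_add_finrank_orthogonal' (B := B') (S.comap W.subtype)
  rw [hker, inf_bot_eq, finrank_bot, add_zero] at key
  rw [← (comapSubtypeEquivOfLe hSW).finrank_eq, ← (comapSubtypeEquivOfLe hUW).finrank_eq]
  exact key ▸ Nat.add_le_add_left (finrank_mono hU') _

theorem two_mul_finrank_span_le_finrank_add_one {W : Submodule F V} [FiniteDimensional F W]
    (hW : ∀ w ∈ W, w ≠ 0 → ∃ v ∈ W, B w v ≠ 0) {e : V} (he : e ∈ W) (hee : B e e ≠ 0)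
    {κ : Type*} {b : κ → V} (hb : ∀ i, b i ∈ W)
    (hrank : ∀ i j, B e e * B (b i) (b j) = B (b i) e * B e (b j)) :
    2 * finrank F (span F (Set.range b)) ≤ finrank F W + 1 := by
  set u : κ → V := fun j => b j - (B e (b j) / B e e) • e
  have hbu : ∀ i j, B (b i) (u j) = 0 := by
    intro i j
    simp only [u, map_sub, map_smul, smul_eq_mul]
    field_simp
    linear_combination hrank i j
  have hSW : span F (Set.range b) ≤ W := span_le.2 <| Set.range_subset_iff.2 hb
  have hUW : span F (Set.range u) ≤ W :=
    span_le.2 <| Set.range_subset_iff.2 fun j => W.sub_mem (hb j) (W.smul_mem _ he)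
  have hSU : span F (Set.range b) ≤ span F {e} ⊔ span F (Set.range u) := by
    refine span_le.2 <| Set.range_subset_iff.2 fun j => ?_
    have hbj : b j = (B e (b j) / B e e) • e + u j := by simp [u]
    rw [hbj]
    exact add_mem (mem_sup_left (smul_mem _ _ (mem_span_singleton_self e)))
      (mem_sup_right (subset_span ⟨j, rfl⟩))
  have horth := B.finrank_add_finrank_le_of_le_orthogonal hW hSW hUW
    (B.span_range_le_orthogonal_span_range hbu)
  have := finiteDimensional_of_le hUW
  have he0 : e ≠ 0 := fun h => hee (by simp [h])
  have hsup := (finrank_add_le_finrank_add_finrank _ _).trans' (finrank_mono hSU)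
  rw [finrank_span_singleton he0] at hsup
  omega

end LinearMap.BilinForm

/-- Lemma on {0,1}-vectors in a non-degenerate subspace of F_ℓ^n. -/
theorem dimension_lemma (ℓ n t : ℕ) [Fact ℓ.Prime] (ht : 0 < t)
    (W : Submodule (ZMod ℓ) (Fin n → ZMod ℓ))
    (hW : ∀ u ∈ W, u ≠ 0 → ∃ v ∈ W, dotProduct u v ≠ 0)
    (b : Fin t → (Fin n → ZMod ℓ))
    (hinj : Function.Injective b)
    (hmem : ∀ i, b i ∈ W)
    (h01 : ∀ i j, b i j = 0 ∨ b i j = 1)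
    (hprod : ∀ i j, dotProduct (b ⟨0, ht⟩) (b ⟨0, ht⟩) * dotProduct (b i) (b j)
        = dotProduct (b ⟨0, ht⟩) (b i) * dotProduct (b ⟨0, ht⟩) (b j)
      ∧ dotProduct (b ⟨0, ht⟩) (b ⟨0, ht⟩) * dotProduct (b i) (b j) ≠ 0) :
    2 * Nat.clog 2 (t + 1) - 1 ≤ Module.finrank (ZMod ℓ) ↥W := by
  set i₀ : Fin t := ⟨0, ht⟩
  have hee : b i₀ ⬝ᵥ b i₀ ≠ 0 := left_ne_zero_of_mul (hprod i₀ i₀).2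
  have hne : ∀ i, b i ≠ 0 := fun i hi =>
    right_ne_zero_of_mul (hprod i i).2 (by simp [hi])
  have hdim := LinearMap.BilinForm.two_mul_finrank_span_le_finrank_add_one
    (dotProductBilin (ZMod ℓ) (ZMod ℓ)) hW (hmem i₀) hee hmem fun i j => by
      simpa [dotProduct_comm (b i)] using (hprod i j).1
  have hcount := add_one_le_two_pow_finrank_span hinj hne h01
  rw [Fintype.card_fin] at hcount
  have hclog := (Nat.clog_le_iff_le_pow one_lt_two).2 hcount
  omega
end

section
/- If a family A of subsets of [n] satisfies that for every k ≥ 1 and every k distinct sets A_1, ..., A_k ∈ A the intersection A_1 ∩ ... ∩ A_k has even size, then there exist pairwise disjoint even-sized subsets B_1, ..., B_s of [n] such that every member of A is a union of some subcollection of the B_i. -/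
open Finset

lemma even_inf_sdiff_sup {n : ℕ} (𝒜 : Finset (Finset (Fin n)))
    (h : ∀ S : Finset (Finset (Fin n)), S ⊆ 𝒜 → S.Nonempty → Even (S.inf id).card) :
    ∀ N : Finset (Finset (Fin n)), N ⊆ 𝒜 → ∀ P : Finset (Finset (Fin n)), P ⊆ 𝒜 → P.Nonempty →
      Even ((P.inf id \ N.sup id).card) := by
  classical
  intro N
  induction N using Finset.induction_on with
  | empty =>
      intro _ P hP hPne
      simpa using h P hP hPne
  | @insert A N' hAN' ih =>
      intro hsub P hP hPne
      have hA : A ∈ 𝒜 := hsub (mem_insert_self _ _)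
      have hN' : N' ⊆ 𝒜 := fun x hx => hsub (mem_insert_of_mem hx)
      have h1 : Even ((P.inf id \ N'.sup id).card) := ih hN' P hP hPne
      have h2 : Even (((insert A P).inf id \ N'.sup id).card) :=
        ih hN' (insert A P) (insert_subset hA hP) (insert_nonempty _ _)
      have key : (P.inf id \ (insert A N').sup id) =
          (P.inf id \ N'.sup id) \ ((insert A P).inf id \ N'.sup id) := by
        ext x
        simp only [mem_sdiff, sup_insert, inf_insert, id_eq, sup_eq_union, inf_eq_inter,
          mem_union, mem_inter]
        tauto
      have hsub2 : ((insert A P).inf id \ N'.sup id) ⊆ (P.inf id \ N'.sup id) := by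
        intro x hx
        simp only [mem_sdiff, inf_insert, id_eq, inf_eq_inter, mem_inter] at hx ⊢
        tauto
      simp only [inf_insert, id_eq, inf_eq_inter] at h2
      rw [key, card_sdiff_of_subset hsub2, Nat.even_sub (card_le_card hsub2)]
      simp [h1, h2]

/-- A family that is a k-wise eventown for every k is contained in the family of unions
of disjoint even blocks. -/
theorem all_kwise_eventown_structure (n : ℕ) (𝒜 : Finset (Finset (Fin n)))
    (h : ∀ S : Finset (Finset (Fin n)), S ⊆ 𝒜 → S.Nonempty → Even (S.inf id).card) :
    ∃ (s : ℕ) (B : Fin s → Finset (Fin n)),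
      (∀ i j, i ≠ j → Disjoint (B i) (B j)) ∧
      (∀ i, Even (B i).card) ∧
      (∀ A ∈ 𝒜, ∃ S : Finset (Fin s), A = S.sup B) := by
  classical
  -- the block of x : all y belonging to exactly the same members of 𝒜
  set blk : Fin n → Finset (Fin n) :=
    fun x => Finset.univ.filter (fun y => ∀ A ∈ 𝒜, (x ∈ A ↔ y ∈ A)) with hblk
  have mem_blk : ∀ x y, y ∈ blk x ↔ ∀ A ∈ 𝒜, (x ∈ A ↔ y ∈ A) := by
    intro x y; simp [hblk]
  have self_mem : ∀ x, x ∈ blk x := fun x => (mem_blk x x).2 (fun A _ => Iff.rfl)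
  have blk_eq : ∀ x y, y ∈ blk x → blk y = blk x := by
    intro x y hy
    rw [mem_blk] at hy
    ext z
    rw [mem_blk, mem_blk]
    constructor <;> intro hz A hA
    · exact (hy A hA).trans (hz A hA)
    · exact (hy A hA).symm.trans (hz A hA)
  have blk_even : ∀ x, (∃ A ∈ 𝒜, x ∈ A) → Even (blk x).card := by
    rintro x ⟨A₀, hA₀, hxA₀⟩
    have hrepr : blk x =
        (𝒜.filter (fun A => x ∈ A)).inf id \ (𝒜.filter (fun A => x ∉ A)).sup id := by
      ext y
      rw [mem_blk]
      simp only [mem_sdiff, Finset.mem_inf, Finset.mem_sup, mem_filter, id_eq, not_exists]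
      constructor
      · intro hz
        refine ⟨fun A hA => (hz A hA.1).1 hA.2, ?_⟩
        rintro A ⟨⟨hA, hxA⟩, hyA⟩
        exact hxA ((hz A hA).2 hyA)
      · rintro ⟨h1, h2⟩ A hA
        constructor
        · intro hxA; exact h1 A ⟨hA, hxA⟩
        · intro hyA
          by_contra hxA
          exact h2 A ⟨⟨hA, hxA⟩, hyA⟩
    rw [hrepr]
    exact even_inf_sdiff_sup 𝒜 h _ (filter_subset _ _) _ (filter_subset _ _)
      ⟨A₀, mem_filter.2 ⟨hA₀, hxA₀⟩⟩
  refine ⟨n, fun i => if (∃ A ∈ 𝒜, i ∈ A) ∧ (∀ j ∈ blk i, i ≤ j) then blk i else ∅,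
    ?_, ?_, ?_⟩
  · intro i j hij
    dsimp only
    by_cases hi : (∃ A ∈ 𝒜, i ∈ A) ∧ (∀ k ∈ blk i, i ≤ k)
    · by_cases hj : (∃ A ∈ 𝒜, j ∈ A) ∧ (∀ k ∈ blk j, j ≤ k)
      · rw [if_pos hi, if_pos hj]
        rw [Finset.disjoint_left]
        intro y hyi hyj
        have heq : blk i = blk j := (blk_eq i y hyi).symm.trans (blk_eq j y hyj)
        have h1 : i ≤ j := hi.2 j (heq ▸ self_mem j)
        have h2 : j ≤ i := hj.2 i (heq.symm ▸ self_mem i)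
        exact hij (le_antisymm h1 h2)
      · rw [if_neg hj]; simp
    · rw [if_neg hi]; simp
  · intro i
    dsimp only
    by_cases hi : (∃ A ∈ 𝒜, i ∈ A) ∧ (∀ k ∈ blk i, i ≤ k)
    · rw [if_pos hi]; exact blk_even i hi.1
    · rw [if_neg hi]; simp
  · intro A hA
    refine ⟨Finset.univ.filter
      (fun i => i ∈ A ∧ (∃ A' ∈ 𝒜, i ∈ A') ∧ ∀ j ∈ blk i, i ≤ j), ?_⟩
    ext x
    rw [Finset.mem_sup]
    constructor
    · intro hxA
      set i := (blk x).min' ⟨x, self_mem x⟩ with hi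
      have him : i ∈ blk x := Finset.min'_mem _ _
      have heq : blk i = blk x := blk_eq x i him
      have hiA : i ∈ A := ((mem_blk x i).1 him A hA).1 hxA
      have hcond : (∃ A' ∈ 𝒜, i ∈ A') ∧ ∀ j ∈ blk i, i ≤ j := by
        refine ⟨⟨A, hA, hiA⟩, ?_⟩
        intro j hj
        rw [heq] at hj
        exact Finset.min'_le _ _ hj
      refine ⟨i, ?_, ?_⟩
      · simp only [mem_filter, mem_univ, true_and]
        exact ⟨hiA, hcond⟩
      · rw [if_pos hcond, heq]
        exact self_mem x
    · rintro ⟨i, hiS, hx⟩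
      simp only [mem_filter, mem_univ, true_and] at hiS
      obtain ⟨hiA, hcond⟩ := hiS
      rw [if_pos hcond] at hx
      exact ((mem_blk i x).1 hx A hA).1 hiA
end

section
/- Let A be a family of subsets of [n] such that every intersection of at most k (not necessarily distinct) sets from A has even size (a strong k-wise eventown). Then the family of all subsets of [n] whose characteristic vector in F_2^n lies in the F_2-linear span of the characteristic vectors of members of A is also a strong k-wise eventown. -/
/-- The characteristic vector of a subset of [n] in F_2^n. -/
def charVec (n : ℕ) (A : Finset (Fin n)) : Fin n → ZMod 2 := fun i => if i ∈ A then 1 else 0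

open Finset

/-- The multilinear map `v ↦ ∑ x, ∏ i, v i x`. -/
def parityMap (k n : ℕ) :
    MultilinearMap (ZMod 2) (fun _ : Fin k => Fin n → ZMod 2) (ZMod 2) where
  toFun v := ∑ x, ∏ i, v i x
  map_update_add' := by
    intro _inst v j a b
    have key : ∀ (y : Fin n → ZMod 2) (x : Fin n),
        ∏ i, Function.update v j y i x = y x * ∏ i ∈ univ \ {j}, v i x := by
      intro y x
      have h1 : ∀ i : Fin _, Function.update v j y i x
          = Function.update (fun i => v i x) j (y x) i := by
        intro i
        exact Function.apply_update (fun _ u => u x) v j y i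
      rw [Finset.prod_congr rfl (fun i _ => h1 i)]
      rw [Finset.prod_update_of_mem (mem_univ j)]
    simp only [key, Pi.add_apply, add_mul, ← Finset.sum_add_distrib]
  map_update_smul' := by
    intro _inst v j c a
    have key : ∀ (y : Fin n → ZMod 2) (x : Fin n),
        ∏ i, Function.update v j y i x = y x * ∏ i ∈ univ \ {j}, v i x := by
      intro y x
      have h1 : ∀ i : Fin _, Function.update v j y i x
          = Function.update (fun i => v i x) j (y x) i := by
        intro i
        exact Function.apply_update (fun _ u => u x) v j y i
      rw [Finset.prod_congr rfl (fun i _ => h1 i)]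
      rw [Finset.prod_update_of_mem (mem_univ j)]
    simp only [key, Pi.smul_apply, smul_eq_mul, mul_assoc, ← Finset.mul_sum]

/-- A multilinear map vanishing on tuples from `S` vanishes on tuples from `span S`. -/
lemma multilinear_zero_of_span {ι : Type*} [Fintype ι] [DecidableEq ι]
    {R M N : Type*} [CommSemiring R] [AddCommMonoid M] [AddCommMonoid N]
    [Module R M] [Module R N]
    (P : MultilinearMap R (fun _ : ι => M) N) (S : Set M)
    (hS : ∀ w : ι → M, (∀ i, w i ∈ S) → P w = 0) :
    ∀ v : ι → M, (∀ i, v i ∈ Submodule.span R S) → P v = 0 := by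
  suffices H : ∀ t : Finset ι, ∀ v : ι → M, (∀ i ∈ t, v i ∈ Submodule.span R S) →
      (∀ i ∉ t, v i ∈ S) → P v = 0 by
    intro v hv
    exact H univ v (fun i _ => hv i) (fun i hi => absurd (mem_univ i) hi)
  intro t
  induction t using Finset.induction with
  | empty => intro v _ h2; exact hS v fun i => h2 i (notMem_empty i)
  | @insert j t hj IH =>
    intro v h1 h2
    have hvj : v j ∈ Submodule.span R S := h1 j (mem_insert_self j t)
    have key : ∀ x ∈ Submodule.span R S, P (Function.update v j x) = 0 := by
      intro x hx
      induction hx using Submodule.span_induction with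
      | mem y hy =>
        apply IH
        · intro i hi
          rcases eq_or_ne i j with rfl | hij
          · exact absurd hi hj
          · rw [Function.update_of_ne hij]
            exact h1 i (mem_insert_of_mem hi)
        · intro i hi
          rcases eq_or_ne i j with rfl | hij
          · rw [Function.update_self]; exact hy
          · rw [Function.update_of_ne hij]
            exact h2 i (by simp [hij, hi])
      | zero => simp
      | add a b _ _ ha hb => rw [P.map_update_add, ha, hb, add_zero]
      | smul c a _ ha => rw [P.map_update_smul, ha, smul_zero]
    have := key (v j) hvj
    rwa [Function.update_eq_self] at this

lemma parityMap_charVec (k n : ℕ) (f : Fin k → Finset (Fin n)) :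
    parityMap k n (fun i => charVec n (f i)) = ((Finset.univ.inf f).card : ZMod 2) := by
  have hdef : parityMap k n (fun i => charVec n (f i)) = ∑ x, ∏ i, charVec n (f i) x := rfl
  rw [hdef]
  have h1 : ∀ x : Fin n, (∏ i, charVec n (f i) x)
      = if x ∈ Finset.univ.inf f then (1 : ZMod 2) else 0 := by
    intro x
    simp only [charVec, Finset.prod_boole]
    congr 1
    simp [Finset.mem_inf]
  rw [Finset.sum_congr rfl fun x _ => h1 x, Finset.sum_boole]
  simp [Finset.filter_mem_eq_inter]

/-- The linear closure of a strong k-wise eventown is a strong k-wise eventown. -/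
theorem linear_closure_strong_kwise (n k : ℕ) (𝒜 : Finset (Finset (Fin n)))
    (h : ∀ k', 1 ≤ k' → k' ≤ k → ∀ f : Fin k' → Finset (Fin n),
      (∀ i, f i ∈ 𝒜) → Even (Finset.univ.inf f).card) :
    ∀ k', 1 ≤ k' → k' ≤ k → ∀ f : Fin k' → Finset (Fin n),
      (∀ i, charVec n (f i) ∈ Submodule.span (ZMod 2) (charVec n '' ↑𝒜)) →
      Even (Finset.univ.inf f).card := by
  intro k' hk1 hk2 f hf
  have hz : parityMap k' n (fun i => charVec n (f i)) = 0 := by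
    apply multilinear_zero_of_span (parityMap k' n) (charVec n '' ↑𝒜) _ _ hf
    intro w hw
    choose g hg1 hg2 using fun i => hw i
    have hw' : w = fun i => charVec n (g i) := by
      funext i; exact (hg2 i).symm
    rw [hw', parityMap_charVec]
    exact (ZMod.natCast_eq_zero_iff _ 2).mpr (h k' hk1 hk2 g hg1).two_dvd
  rw [parityMap_charVec] at hz
  obtain ⟨m, hm⟩ := (ZMod.natCast_eq_zero_iff _ 2).mp hz
  exact ⟨m, by omega⟩
end

section
/- If a family A of subsets of [n] is a strong k-wise eventown (k ≥ 2) but not a (k+1)-wise eventown, then n ≥ 2^(k+1) − 1. -/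
/-!
Take `k + 1` members of the family whose intersection is odd. For a nonempty subfamily `T`,
inclusion–exclusion writes the size of the atom "in every member of `T`, in no other chosen
member" as an alternating sum of sizes of intersections of subfamilies containing `T`. Modulo 2
every term but the full intersection vanishes, so each of the `2 ^ (k + 1) - 1` atoms is odd,
hence contains a point, and such a point determines `T` as the set of chosen members
containing it.
-/

open Finset

variable {α : Type*} [DecidableEq α] [Fintype α]

theorem card_inf_inter_inf_compl (T U : Finset (Finset α)) :
    (#(T.inf id ∩ U.inf compl) : ℤ) = ∑ V ∈ U.powerset, (-1 : ℤ) ^ #V * #((T ∪ V).inf id) := by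
  have := inclusion_exclusion_sum_inf_compl U id (fun a => if a ∈ T.inf id then (1 : ℤ) else 0)
  simp only [sum_boole, id, smul_eq_mul] at this
  rw [filter_mem_eq_inter, inter_comm] at this
  rw [this]
  refine sum_congr rfl fun V _ => ?_
  rw [filter_mem_eq_inter, inf_union, inter_comm]
  rfl

theorem odd_card_inf_inter_inf_compl_sdiff {S T : Finset (Finset α)} (hTS : T ⊆ S)
    (hT : T.Nonempty) (heven : ∀ R ⊂ S, R.Nonempty → Even #(R.inf id))
    (hodd : Odd #(S.inf id)) : Odd #(T.inf id ∩ (S \ T).inf compl) := by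
  rw [← Int.odd_coe_nat, card_inf_inter_inf_compl,
    ← add_sum_erase _ _ (mem_powerset_self (S \ T)), union_sdiff_of_subset hTS]
  refine (Odd.mul (Odd.pow (by decide)) (Int.odd_coe_nat _ |>.mpr hodd)).add_even
    (even_sum _ fun V hV => Even.mul_left ?_ _)
  obtain ⟨hne, hV⟩ := mem_erase.mp hV
  rw [mem_powerset] at hV
  refine Int.even_coe_nat _ |>.mpr (heven _ ?_ (hT.mono subset_union_left))
  refine Finset.ssubset_iff_subset_ne.mpr
    ⟨union_subset hTS (hV.trans sdiff_subset), fun h => hne ?_⟩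
  rw [← h, union_sdiff_left]
  exact (sdiff_eq_self_of_disjoint (disjoint_of_subset_left hV disjoint_sdiff_self_left)).symm

theorem filter_mem_eq_of_mem_inf_inter_inf_compl_sdiff {S T : Finset (Finset α)} (hTS : T ⊆ S)
    {x : α} (hx : x ∈ T.inf id ∩ (S \ T).inf compl) : S.filter (x ∈ ·) = T := by
  simp only [mem_inter, mem_inf, id, mem_sdiff, mem_compl] at hx
  ext A
  simp only [mem_filter]
  constructor
  · rintro ⟨hA, hxA⟩
    by_contra h
    exact hx.2 A ⟨hA, h⟩ hxA
  · exact fun hA => ⟨hTS hA, hx.1 A hA⟩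

theorem two_pow_card_sub_one_le_card {S : Finset (Finset α)}
    (heven : ∀ R ⊂ S, R.Nonempty → Even #(R.inf id)) (hodd : Odd #(S.inf id)) :
    2 ^ #S - 1 ≤ Fintype.card α := by
  have hcover : S.powerset.erase ∅ ⊆ univ.image fun x => S.filter (x ∈ ·) := by
    intro T hT
    obtain ⟨hne, hTS⟩ := mem_erase.mp hT
    rw [mem_powerset] at hTS
    obtain ⟨x, hx⟩ := card_pos.mp
      (odd_card_inf_inter_inf_compl_sdiff hTS (nonempty_iff_ne_empty.mpr hne) heven hodd).pos
    exact mem_image.mpr ⟨x, mem_univ x, filter_mem_eq_of_mem_inf_inter_inf_compl_sdiff hTS hx⟩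
  calc 2 ^ #S - 1 = #(S.powerset.erase ∅) := by
        rw [card_erase_of_mem (empty_mem_powerset S), card_powerset]
    _ ≤ #(univ.image fun x => S.filter (x ∈ ·)) := card_le_card hcover
    _ ≤ Fintype.card α := card_image_le

theorem strong_kwise_not_succ_universe_general (n k : ℕ) (𝒜 : Finset (Finset (Fin n)))
    (hstrong : ∀ k', 1 ≤ k' → k' ≤ k → ∀ S : Finset (Finset (Fin n)), S ⊆ 𝒜 →
      S.card = k' → Even (S.inf id).card)
    (hnot : ∃ S : Finset (Finset (Fin n)), S ⊆ 𝒜 ∧ S.card = k + 1 ∧ Odd (S.inf id).card) :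
    2 ^ (k + 1) - 1 ≤ n := by
  obtain ⟨S, hS𝒜, hScard, hSodd⟩ := hnot
  have heven : ∀ R ⊂ S, R.Nonempty → Even #(R.inf id) := fun R hRS hR =>
    hstrong #R hR.card_pos (by have := card_lt_card hRS; omega) R (hRS.subset.trans hS𝒜) rfl
  simpa [hScard] using two_pow_card_sub_one_le_card heven hSodd

/-- A strong k-wise eventown that is not a (k+1)-wise eventown requires n ≥ 2^(k+1) - 1. -/
theorem strong_kwise_not_succ_universe (n k : ℕ) (hk : 2 ≤ k) (𝒜 : Finset (Finset (Fin n)))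
    (hstrong : ∀ k', 1 ≤ k' → k' ≤ k → ∀ S : Finset (Finset (Fin n)), S ⊆ 𝒜 →
      S.card = k' → Even (S.inf id).card)
    (hnot : ∃ S : Finset (Finset (Fin n)), S ⊆ 𝒜 ∧ S.card = k + 1 ∧ Odd (S.inf id).card) :
    2 ^ (k + 1) - 1 ≤ n :=
  strong_kwise_not_succ_universe_general n k 𝒜 hstrong hnot
end

section
/- For every k ≥ 2 and every n ≥ 2^(k+1) − 1 there exists a family A of subsets of [n] of size 2^(⌊n/2⌋ − (2^k − k − 2)) that is a strong k-wise eventown but not a (k+1)-wise eventown. -/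
open Finset

namespace KW

def dot {K : ℕ} (a x : Fin K → ZMod 2) : ZMod 2 := ∑ i, a i * x i

lemma dot_add {K : ℕ} (a x y : Fin K → ZMod 2) : dot a (x + y) = dot a x + dot a y := by
  simp [dot, mul_add, Finset.sum_add_distrib]

lemma dot_zero {K : ℕ} (a : Fin K → ZMod 2) : dot a 0 = 0 := by simp [dot]

lemma dot_single_right {K : ℕ} (a : Fin K → ZMod 2) (i : Fin K) :
    dot a (Pi.single i 1) = a i := by
  simp [dot, Pi.single_apply]

lemma dot_single_left {K : ℕ} (x : Fin K → ZMod 2) (i : Fin K) :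
    dot (Pi.single i 1) x = x i := by
  simp [dot, Pi.single_apply]

lemma zmod2_eq_of_iff (u v b : ZMod 2) (h : u = b ↔ v = b) : u = v := by
  revert h; revert u v b; decide

lemma mem_inf_finset {ι α : Type*} [Fintype α] [DecidableEq α] {s : Finset ι}
    {F : ι → Finset α} {x : α} : x ∈ s.inf F ↔ ∀ i ∈ s, x ∈ F i := by
  induction s using Finset.cons_induction with
  | empty => simp [Finset.top_eq_univ]
  | cons i s hi ih => simp [Finset.inf_cons, ih]

lemma inf_map {ι α β : Type*} [Fintype α] [DecidableEq α] [Fintype β] [DecidableEq β] (e : α ↪ β)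
    {s : Finset ι} (hs : s.Nonempty) (F : ι → Finset α) :
    s.inf (fun i => (F i).map e) = (s.inf F).map e := by
  induction hs using Finset.Nonempty.cons_induction with
  | singleton i => simp
  | cons i s hi hs ih =>
      rw [Finset.inf_cons, Finset.inf_cons, ih, Finset.inf_eq_inter, Finset.inf_eq_inter,
        Finset.map_inter]

lemma even_card_invol {α : Type*} [DecidableEq α] (σ : α → α) (hσ : ∀ x, σ (σ x) = x)
    (S : Finset α) (hmem : ∀ x ∈ S, σ x ∈ S) (hne : ∀ x ∈ S, σ x ≠ x) : Even S.card := by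
  induction S using Finset.strongInduction with
  | _ S ih =>
    rcases S.eq_empty_or_nonempty with rfl | ⟨x, hx⟩
    · simp
    · have hσx : σ x ∈ S := hmem x hx
      have hxne : σ x ≠ x := hne x hx
      set S' := (S.erase x).erase (σ x) with hS'
      have hsub : S' ⊂ S := by
        refine Finset.ssubset_of_subset_of_ssubset ?_ (Finset.erase_ssubset hx)
        exact Finset.erase_subset _ _
      have hcard : S.card = S'.card + 2 := by
        rw [hS', Finset.card_erase_of_mem, Finset.card_erase_of_mem hx]
        · have h1 : 1 ≤ S.card := Finset.card_pos.mpr ⟨x, hx⟩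
          have h2 : 2 ≤ S.card := Finset.one_lt_card.mpr ⟨σ x, hσx, x, hx, hxne⟩
          omega
        · exact Finset.mem_erase.mpr ⟨hxne, hσx⟩
      have hev : Even S'.card := by
        apply ih _ hsub
        · intro y hy
          rw [hS', Finset.mem_erase, Finset.mem_erase] at hy ⊢
          obtain ⟨hy1, hy2, hy3⟩ := hy
          refine ⟨?_, ?_, hmem y hy3⟩
          · intro hc; apply hy2; have := congrArg σ hc; rwa [hσ, hσ] at this
          · intro hc; apply hy1; have := congrArg σ hc; rwa [hσ] at this
        · intro y hy
          exact hne y (Finset.mem_of_mem_erase (Finset.mem_of_mem_erase hy))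
      exact hcard ▸ hev.add even_two


def constraintMap (K : ℕ) (A : Finset ((Fin K → ZMod 2) × ZMod 2)) :
    (Fin K → ZMod 2) →ₗ[ZMod 2] (A → ZMod 2) where
  toFun x q := dot q.1.1 x
  map_add' x y := by funext q; simp [dot_add]
  map_smul' c x := by funext q; simp [dot, Finset.mul_sum, mul_left_comm]


lemma even_sol {K : ℕ} (A : Finset ((Fin K → ZMod 2) × ZMod 2)) (hA : A.card < K) :
    Even (Finset.univ.filter fun x : Fin K → ZMod 2 => ∀ q ∈ A, dot q.1 x = q.2).card := by
  obtain ⟨w, hw0, hw⟩ : ∃ w : Fin K → ZMod 2, w ≠ 0 ∧ ∀ q ∈ A, dot q.1 w = 0 := by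
    by_contra hcon
    push_neg at hcon
    have hker : ∀ m, constraintMap K A m = 0 → m = 0 := by
      intro m hm
      by_contra hm0
      obtain ⟨q, hq, hne⟩ := hcon m hm0
      exact hne (congrFun hm ⟨q, hq⟩)
    have hinj : Function.Injective (constraintMap K A) :=
      LinearMap.ker_eq_bot.mp (LinearMap.ker_eq_bot'.mpr hker)
    have hle := LinearMap.finrank_le_finrank_of_injective hinj
    rw [Module.finrank_fin_fun, Module.finrank_pi] at hle
    simp [Fintype.card_coe] at hle
    omega
  have hww : w + w = 0 := by
    funext i; exact CharTwo.add_self_eq_zero _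
  apply even_card_invol (fun x => x + w)
  · intro x; rw [add_assoc, hww, add_zero]
  · intro x hx
    simp only [Finset.mem_filter, Finset.mem_univ, true_and] at hx ⊢
    intro q hq; rw [dot_add, hw q hq, add_zero]; exact hx q hq
  · intro x _ hc
    exact hw0 (by simpa using hc)


lemma zmod2_eq_of_iff0 (b b' : ZMod 2) (h : 0 = b ↔ 0 = b') : b = b' := by
  revert h; revert b b'; decide

lemma single_one_injective {K : ℕ} :
    Function.Injective (fun l : Fin K => Pi.single l (1 : ZMod 2)) := by
  intro l l' h
  by_contra hne
  have h2 := congrFun h l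
  simp only [Pi.single_eq_same, Pi.single_eq_of_ne hne] at h2
  exact one_ne_zero h2

lemma single_one_ne_zero {K : ℕ} (l : Fin K) :
    (Pi.single l (1 : ZMod 2) : Fin K → ZMod 2) ≠ 0 := by
  intro h
  have h2 := congrFun h l
  simp only [Pi.single_eq_same, Pi.zero_apply] at h2
  exact one_ne_zero h2

section EvenCase
variable (K : ℕ)
def Geven : (Fin K → ZMod 2) × ZMod 2 → Finset (Fin K → ZMod 2) :=
  fun q => Finset.univ.filter fun x => dot q.1 x = q.2

lemma Geven_inj : Function.Injective (Geven K) := by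
  rintro ⟨a, b⟩ ⟨a', b'⟩ h
  have hmem : ∀ x, dot a x = b ↔ dot a' x = b' := by
    intro x
    have := Finset.ext_iff.mp h x
    simpa [Geven] using this
  have hb : b = b' := by
    have h0 := hmem 0
    rw [dot_zero, dot_zero] at h0
    exact zmod2_eq_of_iff0 b b' h0
  subst hb
  have ha : a = a' := by
    funext i
    have := hmem (Pi.single i 1)
    rw [dot_single_right, dot_single_right] at this
    exact zmod2_eq_of_iff _ _ _ this
  simp [ha]

lemma Geven_even (k : ℕ) (hK : K = k + 1) (s : Finset ((Fin K → ZMod 2) × ZMod 2))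
    (hs : s.Nonempty) (hsk : s.card ≤ k) : Even ((s.inf (Geven K)).card) := by
  have hinf : s.inf (Geven K) = Finset.univ.filter fun x => ∀ q ∈ s, dot q.1 x = q.2 := by
    ext x; simp [mem_inf_finset, Geven]
  rw [hinf]
  exact even_sol s (by omega)

lemma Geven_odd (k : ℕ) (hK : K = k + 1) :
    ∃ s : Finset ((Fin K → ZMod 2) × ZMod 2), s.card = k + 1 ∧ Odd ((s.inf (Geven K)).card) := by
  refine ⟨Finset.univ.image (fun l : Fin K => (Pi.single l (1 : ZMod 2), (1 : ZMod 2))), ?_, ?_⟩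
  · rw [Finset.card_image_of_injective, Finset.card_univ, Fintype.card_fin, hK]
    intro l l' h
    exact single_one_injective (congrArg Prod.fst h)
  · have hinf : (Finset.univ.image
        (fun l : Fin K => (Pi.single l (1 : ZMod 2), (1 : ZMod 2)))).inf (Geven K)
        = {fun _ => (1 : ZMod 2)} := by
      ext x
      simp only [mem_inf_finset, Finset.mem_image, Finset.mem_univ, true_and,
        Finset.mem_singleton, Geven, Finset.mem_filter, forall_exists_index]
      constructor
      · intro hx
        funext l
        have := hx (Pi.single l 1, 1) l rfl
        rwa [dot_single_left] at this
      · rintro rfl q l rfl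
        rw [dot_single_left]
    rw [hinf, Finset.card_singleton]
    exact odd_one
end EvenCase

section OddCase
variable (K : ℕ)
def Godd : (Fin K → ZMod 2) → Finset {x : Fin K → ZMod 2 // x ≠ 0} :=
  fun a => Finset.univ.filter fun x => dot a x.val = 1

lemma Godd_inj : Function.Injective (Godd K) := by
  intro a a' h
  have hmem : ∀ x : {x : Fin K → ZMod 2 // x ≠ 0}, dot a x.val = 1 ↔ dot a' x.val = 1 := by
    intro x
    have := Finset.ext_iff.mp h x
    simpa [Godd] using this
  funext i
  have := hmem ⟨Pi.single i 1, single_one_ne_zero i⟩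
  rw [dot_single_right, dot_single_right] at this
  exact zmod2_eq_of_iff _ _ _ this

lemma card_filter_subtype (P : (Fin K → ZMod 2) → Prop) [DecidablePred P] (hP0 : ¬ P 0) :
    (Finset.univ.filter fun x : {x : Fin K → ZMod 2 // x ≠ 0} => P x.val).card
      = (Finset.univ.filter fun x : Fin K → ZMod 2 => P x).card := by
  rw [← Finset.card_map (Function.Embedding.subtype _)]
  congr 1
  ext x
  simp only [Finset.mem_map, Finset.mem_filter, Finset.mem_univ, true_and,
    Function.Embedding.coe_subtype]
  constructor
  · rintro ⟨⟨y, hy0⟩, hPy, rfl⟩; exact hPy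
  · intro hPx
    have hx0 : x ≠ 0 := fun h => hP0 (h ▸ hPx)
    exact ⟨⟨x, hx0⟩, hPx, rfl⟩

lemma Godd_even (k : ℕ) (hK : K = k + 1) (s : Finset (Fin K → ZMod 2))
    (hs : s.Nonempty) (hsk : s.card ≤ k) : Even ((s.inf (Godd K)).card) := by
  have hinf : s.inf (Godd K)
      = Finset.univ.filter fun x : {x : Fin K → ZMod 2 // x ≠ 0} => ∀ a ∈ s, dot a x.val = 1 := by
    ext x; simp [mem_inf_finset, Godd]
  rw [hinf]
  obtain ⟨a₀, ha₀⟩ := hs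
  have hP0 : ¬ (∀ a ∈ s, dot a (0 : Fin K → ZMod 2) = 1) := by
    intro h
    have := h a₀ ha₀
    rw [dot_zero] at this
    exact one_ne_zero this.symm
  rw [card_filter_subtype K (fun y => ∀ a ∈ s, dot a y = 1) hP0]
  have hfe : (Finset.univ.filter fun x : Fin K → ZMod 2 => ∀ a ∈ s, dot a x = 1)
      = Finset.univ.filter fun x : Fin K → ZMod 2 =>
          ∀ q ∈ s.image (fun a => (a, (1 : ZMod 2))), dot q.1 x = q.2 := by
    ext x
    simp only [Finset.mem_filter, Finset.mem_univ, true_and, Finset.mem_image,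
      forall_exists_index]
    constructor
    · rintro hx q a ⟨ha, rfl⟩; exact hx a ha
    · intro hx a ha; exact hx (a, 1) a ⟨ha, rfl⟩
  rw [hfe]
  apply even_sol
  calc (s.image fun a => (a, (1 : ZMod 2))).card ≤ s.card := Finset.card_image_le
    _ < K := by omega

lemma Godd_odd (k : ℕ) (hK : K = k + 1) :
    ∃ s : Finset (Fin K → ZMod 2), s.card = k + 1 ∧ Odd ((s.inf (Godd K)).card) := by
  have hKpos : 0 < K := by omega
  have hone : (fun _ => (1 : ZMod 2)) ≠ (0 : Fin K → ZMod 2) := by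
    intro h
    have := congrFun h ⟨0, hKpos⟩
    exact one_ne_zero this
  refine ⟨Finset.univ.image (fun l : Fin K => Pi.single l (1 : ZMod 2)), ?_, ?_⟩
  · rw [Finset.card_image_of_injective _ single_one_injective, Finset.card_univ,
      Fintype.card_fin, hK]
  · have hinf : (Finset.univ.image (fun l : Fin K => Pi.single l (1 : ZMod 2))).inf (Godd K)
        = {(⟨fun _ => 1, hone⟩ : {x : Fin K → ZMod 2 // x ≠ 0})} := by
      ext x
      simp only [mem_inf_finset, Finset.mem_image, Finset.mem_univ, true_and,
        Finset.mem_singleton, Godd, Finset.mem_filter, forall_exists_index]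
      constructor
      · intro hx
        have : x.val = fun _ => (1 : ZMod 2) := by
          funext l
          have := hx (Pi.single l 1) l rfl
          rwa [dot_single_left] at this
        exact Subtype.ext this
      · rintro rfl a l rfl
        rw [dot_single_left]
    rw [hinf, Finset.card_singleton]
    exact odd_one
end OddCase

lemma core (n k p : ℕ) {γ J : Type} [Fintype γ] [DecidableEq γ] [Fintype J] [DecidableEq J]
    (G : J → Finset γ) (hGinj : Function.Injective G)
    (heven : ∀ s : Finset J, s.Nonempty → s.card ≤ k → Even ((s.inf G).card))
    (hodd : ∃ s : Finset J, s.card = k + 1 ∧ Odd ((s.inf G).card))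
    (hsize : Fintype.card γ + 2 * p ≤ n)
    (hcount : Fintype.card J * 2 ^ p = 2 ^ (n / 2 - (2 ^ k - k - 2))) :
    ∃ 𝒜 : Finset (Finset (Fin n)),
      𝒜.card = 2 ^ (n / 2 - (2 ^ k - k - 2)) ∧
      (∀ k', 1 ≤ k' → k' ≤ k → ∀ S : Finset (Finset (Fin n)), S ⊆ 𝒜 →
        S.card = k' → Even (S.inf id).card) ∧
      (∃ S : Finset (Finset (Fin n)), S ⊆ 𝒜 ∧ S.card = k + 1 ∧ Odd (S.inf id).card) := by
  obtain ⟨ι⟩ : Nonempty ((γ ⊕ (Fin p × Bool)) ↪ Fin n) := by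
    apply Function.Embedding.nonempty_of_card_le
    simp only [Fintype.card_sum, Fintype.card_prod, Fintype.card_fin, Fintype.card_bool]
    omega
  set M : J × Finset (Fin p) → Finset (γ ⊕ (Fin p × Bool)) :=
    fun q => (G q.1).disjSum (q.2 ×ˢ (Finset.univ : Finset Bool)) with hM
  set Φ : J × Finset (Fin p) → Finset (Fin n) := fun q => (M q).map ι with hΦ
  have hMinj : Function.Injective M := by
    rintro ⟨a, D⟩ ⟨a', D'⟩ h
    simp only [hM] at h
    have h1 : G a = G a' := by
      ext x; have := Finset.ext_iff.mp h (Sum.inl x); simpa using this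
    have h2 : D = D' := by
      ext d; have := Finset.ext_iff.mp h (Sum.inr (d, true)); simpa using this
    simp [hGinj h1, h2]
  have hΦinj : Function.Injective Φ := fun q q' h => hMinj (Finset.map_injective ι h)
  have key : ∀ s : Finset (J × Finset (Fin p)), s.Nonempty →
      ((s.image Φ).inf id).card
        = ((s.image Prod.fst).inf G).card + ((s.inf fun q => q.2).card) * 2 := by
    intro s hs
    rw [Finset.inf_image]
    have h1 : s.inf (id ∘ Φ) = (s.inf M).map ι := by
      rw [show (id ∘ Φ) = fun q => (M q).map ι from rfl]
      exact inf_map ι hs M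
    rw [h1, Finset.card_map]
    have hsplit : s.inf M
        = ((s.image Prod.fst).inf G).disjSum ((s.inf fun q => q.2) ×ˢ (univ : Finset Bool)) := by
      rw [Finset.inf_image]
      ext x
      cases x with
      | inl y => simp [mem_inf_finset, hM]
      | inr y => simp [mem_inf_finset, hM, Finset.mem_product]
    rw [hsplit, Finset.card_disjSum, Finset.card_product, Finset.card_univ, Fintype.card_bool]
  refine ⟨Finset.univ.image Φ, ?_, ?_, ?_⟩
  · rw [Finset.card_image_of_injective _ hΦinj, Finset.card_univ, Fintype.card_prod,
      Fintype.card_finset, Fintype.card_fin]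
    exact hcount
  · intro k' hk1 hk2 S hS hcard
    obtain ⟨s, -, rfl⟩ := Finset.subset_image_iff.mp hS
    rw [Finset.card_image_of_injective _ hΦinj] at hcard
    have hs : s.Nonempty := Finset.card_pos.mp (by omega)
    rw [key s hs]
    refine Even.add ?_ ⟨(s.inf fun q => q.2).card, by ring⟩
    exact heven _ (hs.image _) (le_trans Finset.card_image_le (by omega))
  · obtain ⟨s₀, hs₀card, hs₀odd⟩ := hodd
    set s : Finset (J × Finset (Fin p)) := s₀.image (fun j => (j, (∅ : Finset (Fin p)))) with hsdef
    have hinj2 : Function.Injective (fun j : J => (j, (∅ : Finset (Fin p)))) := by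
      intro a b h; exact (Prod.mk.injEq _ _ _ _).mp h |>.1
    have hscard : s.card = k + 1 := by
      rw [hsdef, Finset.card_image_of_injective _ hinj2, hs₀card]
    have hs : s.Nonempty := Finset.card_pos.mp (by omega)
    refine ⟨s.image Φ, Finset.image_subset_image (Finset.subset_univ s), ?_, ?_⟩
    · rw [Finset.card_image_of_injective _ hΦinj]; exact hscard
    · rw [key s hs]
      have hfst : s.image Prod.fst = s₀ := by
        rw [hsdef, Finset.image_image]; exact Finset.image_id
      have hsnd : (s.inf fun q => q.2) = ∅ := by
        obtain ⟨j, hj⟩ := Finset.card_pos.mp (by omega : 0 < s₀.card)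
        have : (j, (∅ : Finset (Fin p))) ∈ s := by
          rw [hsdef]; exact Finset.mem_image_of_mem _ hj
        exact Finset.subset_empty.mp (Finset.inf_le this)
      rw [hfst, hsnd]
      simpa using hs₀odd

end KW

/-- For every k >= 2 there is ... -/
theorem strong_kwise_not_succ_construction (n k : ℕ) (hk : 2 ≤ k) (hn : 2 ^ (k + 1) - 1 ≤ n) :
    ∃ 𝒜 : Finset (Finset (Fin n)),
      𝒜.card = 2 ^ (n / 2 - (2 ^ k - k - 2)) ∧
      (∀ k', 1 ≤ k' → k' ≤ k → ∀ S : Finset (Finset (Fin n)), S ⊆ 𝒜 →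
        S.card = k' → Even (S.inf id).card) ∧
      (∃ S : Finset (Finset (Fin n)), S ⊆ 𝒜 ∧ S.card = k + 1 ∧ Odd (S.inf id).card) := by
  have hk2 : k + 2 ≤ 2 ^ k := by
    clear hn
    induction k, hk using Nat.le_induction with
    | base => norm_num
    | succ m hm ih =>
        have h2 : 2 ^ (m + 1) = 2 * 2 ^ m := by ring
        omega
  have hpow : 2 ^ (k + 1) = 2 * 2 ^ k := by ring
  have hcf : Fintype.card (Fin (k + 1) → ZMod 2) = 2 ^ (k + 1) := by
    rw [Fintype.card_fun, ZMod.card, Fintype.card_fin]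
  rcases Nat.even_or_odd n with he | ho
  · have hn2 : n % 2 = 0 := Nat.even_iff.mp he
    apply KW.core n k (n / 2 - 2 ^ k) (KW.Geven (k + 1)) (KW.Geven_inj (k + 1))
      (fun s hs hsk => KW.Geven_even (k + 1) k rfl s hs hsk) (KW.Geven_odd (k + 1) k rfl)
    · rw [hcf]
      omega
    · have hc : Fintype.card ((Fin (k + 1) → ZMod 2) × ZMod 2) = 2 ^ (k + 2) := by
        rw [Fintype.card_prod, hcf, ZMod.card]
        ring
      rw [hc, ← pow_add]
      congr 1
      omega
  · have hn2 : n % 2 = 1 := Nat.odd_iff.mp ho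
    have hcs : Fintype.card {x : Fin (k + 1) → ZMod 2 // x ≠ 0} = 2 ^ (k + 1) - 1 := by
      rw [Fintype.card_subtype_compl, Fintype.card_subtype_eq, hcf]
    apply KW.core n k (n / 2 + 1 - 2 ^ k) (KW.Godd (k + 1)) (KW.Godd_inj (k + 1))
      (fun s hs hsk => KW.Godd_even (k + 1) k rfl s hs hsk) (KW.Godd_odd (k + 1) k rfl)
    · rw [hcs]
      omega
    · rw [hcf, ← pow_add]
      congr 1
      omega
end

section
/- If A is a k-wise eventown on [n], then A contains a subfamily A' with |A'| ≥ |A| − (k−1)n such that A' is a strong k-wise eventown. -/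
/-!
Repeatedly remove from `𝒜` a subfamily `T` of fewer than `k` members whose intersection `⋂T` is
odd, choosing `T` of maximum size. Maximality together with the `k`-wise condition makes
`|⋂T ∩ B|` even for every surviving `B`, while `|⋂T ∩ B| = |⋂T|` is odd for `B ∈ T`. Recording
`(⋂T, B)` at each step yields a skew oddtown system, so by the skew oddtown theorem (the Gram matrix
over `𝔽₂` is unitriangular) there are at most `n` steps, each removing at most `k - 1` sets.
-/

open Finset Matrix

variable {α : Type*} [Fintype α] [DecidableEq α]

def indicatorMatrix {ι : Type*} (U : ι → Finset α) : Matrix ι α (ZMod 2) :=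
  Matrix.of fun i a => if a ∈ U i then 1 else 0

theorem indicatorMatrix_mul_transpose_apply {ι κ : Type*} (U : ι → Finset α) (B : κ → Finset α)
    (i : ι) (j : κ) :
    (indicatorMatrix U * (indicatorMatrix B)ᵀ) i j = ((U i ∩ B j).card : ZMod 2) := by
  simp only [indicatorMatrix, mul_apply, transpose_apply, of_apply, ite_zero_mul_ite_zero,
    mul_one, sum_boole]
  congr 2
  ext; simp

theorem card_le_of_skew_odd {ι : Type*} [Fintype ι] [LinearOrder ι] (U B : ι → Finset α)
    (hodd : ∀ i, Odd (U i ∩ B i).card) (heven : ∀ i j, i < j → Even (U i ∩ B j).card) :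
    Fintype.card ι ≤ Fintype.card α := by
  let M := indicatorMatrix U * (indicatorMatrix B)ᵀ
  have hM : ∀ i j, M i j = ((U i ∩ B j).card : ZMod 2) := indicatorMatrix_mul_transpose_apply U B
  have hlower : M.IsLowerTriangular := fun i j hij => by
    rw [hM, ZMod.natCast_eq_zero_iff_even]
    exact heven i j hij
  have hdet : M.det = 1 := by
    rw [det_of_isLowerTriangular M hlower]
    exact prod_eq_one fun i _ => (hM i i).trans (ZMod.natCast_eq_one_iff_odd.mpr (hodd i))
  calc Fintype.card ι = M.rank :=
        (M.rank_of_isUnit ((isUnit_iff_isUnit_det M).mpr (hdet ▸ isUnit_one))).symm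
    _ ≤ (indicatorMatrix U).rank := rank_mul_le_left _ _
    _ ≤ Fintype.card α := rank_le_card_width _

def IsSkewOddSequence (L : List (Finset α × Finset α)) : Prop :=
  (∀ p ∈ L, Odd (p.1 ∩ p.2).card) ∧ L.Pairwise fun p q => Even (p.1 ∩ q.2).card

theorem IsSkewOddSequence.length_le_card {L : List (Finset α × Finset α)}
    (hL : IsSkewOddSequence L) : L.length ≤ Fintype.card α := by
  simpa using card_le_of_skew_odd (fun i : Fin L.length => (L.get i).1) (fun i => (L.get i).2)
    (fun i => hL.1 _ (L.get_mem i)) (List.pairwise_iff_get.mp hL.2)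

def IsKWiseEventown (k : ℕ) (𝒜 : Finset (Finset α)) : Prop :=
  ∀ S ⊆ 𝒜, S.card = k → Even (S.inf id).card

theorem IsKWiseEventown.mono {k : ℕ} {𝒜 ℬ : Finset (Finset α)} (h : IsKWiseEventown k 𝒜)
    (hℬ : ℬ ⊆ 𝒜) : IsKWiseEventown k ℬ :=
  fun S hS => h S (hS.trans hℬ)

def IsShortOddSubfamily (k : ℕ) (𝒜 S : Finset (Finset α)) : Prop :=
  S ⊆ 𝒜 ∧ S.Nonempty ∧ S.card < k ∧ Odd (S.inf id).card

theorem isKWiseEventown_of_forall_not_isShortOddSubfamily {k k' : ℕ} {𝒜 : Finset (Finset α)}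
    (h : ∀ S, ¬ IsShortOddSubfamily k 𝒜 S) (hk' : 1 ≤ k') (hk'k : k' < k) :
    IsKWiseEventown k' 𝒜 := fun S hS hSk' =>
  Nat.not_odd_iff_even.mp fun hodd => h S ⟨hS, card_pos.mp (by omega), by omega, hodd⟩

theorem exists_isShortOddSubfamily_forall_even_inter {k : ℕ} {𝒜 S : Finset (Finset α)}
    (h𝒜 : IsKWiseEventown k 𝒜) (hS : IsShortOddSubfamily k 𝒜 S) :
    ∃ T, IsShortOddSubfamily k 𝒜 T ∧ ∀ B ∈ 𝒜 \ T, Even (T.inf id ∩ B).card := by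
  classical
  obtain ⟨T, hT, hTmax⟩ := exists_max_image (𝒜.powerset.filter (IsShortOddSubfamily k 𝒜)) card
    ⟨S, mem_filter.mpr ⟨mem_powerset.mpr hS.1, hS⟩⟩
  replace hT := (mem_filter.mp hT).2
  refine ⟨T, hT, fun B hB => ?_⟩
  obtain ⟨hB𝒜, hBT⟩ := mem_sdiff.mp hB
  have hsub : insert B T ⊆ 𝒜 := insert_subset hB𝒜 hT.1
  have hcard : (insert B T).card = T.card + 1 := card_insert_of_notMem hBT
  have hinf : (insert B T).inf id = T.inf id ∩ B := by rw [inf_insert, inter_comm]; rfl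
  rw [← hinf]
  rcases (show T.card + 1 ≤ k from hT.2.2.1).eq_or_lt with hk | hk
  · exact h𝒜 _ hsub (hcard.trans hk)
  · -- `insert B T` would be a larger short odd subfamily
    refine Nat.not_odd_iff_even.mp fun hodd => ?_
    have := hTmax _ (mem_filter.mpr ⟨mem_powerset.mpr hsub, hsub, insert_nonempty B T,
      hcard ▸ hk, hodd⟩)
    omega

theorem exists_subset_forall_not_isShortOddSubfamily {k : ℕ} {𝒜 : Finset (Finset α)}
    (h𝒜 : IsKWiseEventown k 𝒜) :
    ∃ 𝒜' ⊆ 𝒜, (∀ S, ¬ IsShortOddSubfamily k 𝒜' S) ∧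
      ∃ L : List (Finset α × Finset α), IsSkewOddSequence L ∧ (∀ p ∈ L, p.2 ∈ 𝒜) ∧
        𝒜.card ≤ 𝒜'.card + L.length * (k - 1) := by
  induction 𝒜 using Finset.strongInduction with
  | H 𝒜 ih =>
    by_cases hS : ∃ S, IsShortOddSubfamily k 𝒜 S
    swap
    · exact ⟨𝒜, subset_rfl, not_exists.mp hS, [], by simp [IsSkewOddSequence], by simp, by simp⟩
    obtain ⟨S, hS⟩ := hS
    obtain ⟨T, ⟨hT𝒜, ⟨B, hBT⟩, hTk, hTodd⟩, heven⟩ :=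
      exists_isShortOddSubfamily_forall_even_inter h𝒜 hS
    obtain ⟨𝒜', h𝒜', hfree, L, hL, hL𝒜, hcard⟩ :=
      ih (𝒜 \ T) (sdiff_ssubset hT𝒜 ⟨B, hBT⟩) (h𝒜.mono sdiff_subset)
    refine ⟨𝒜', h𝒜'.trans sdiff_subset, hfree, (T.inf id, B) :: L, ⟨?_, ?_⟩, ?_, ?_⟩
    · simp only [List.mem_cons, forall_eq_or_imp]
      refine ⟨?_, hL.1⟩
      rwa [inter_eq_left.mpr (show T.inf id ⊆ B from inf_le hBT)]
    · exact List.Pairwise.cons (fun q hq => heven q.2 (hL𝒜 q hq)) hL.2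
    · simp only [List.mem_cons, forall_eq_or_imp]
      exact ⟨hT𝒜 hBT, fun q hq => (mem_sdiff.mp (hL𝒜 q hq)).1⟩
    · have := card_sdiff_add_card_eq_card hT𝒜
      rw [List.length_cons, add_one_mul]
      omega

/-- Every k-wise eventown contains a strong k-wise eventown of size at least |𝒜| - (k-1)n. -/
theorem kwise_contains_strong (n k : ℕ) (𝒜 : Finset (Finset (Fin n)))
    (h : ∀ S : Finset (Finset (Fin n)), S ⊆ 𝒜 → S.card = k → Even (S.inf id).card) :
    ∃ 𝒜' : Finset (Finset (Fin n)), 𝒜' ⊆ 𝒜 ∧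
      𝒜.card ≤ 𝒜'.card + (k - 1) * n ∧
      (∀ k', 1 ≤ k' → k' ≤ k → ∀ S : Finset (Finset (Fin n)), S ⊆ 𝒜' →
        S.card = k' → Even (S.inf id).card) := by
  obtain ⟨𝒜', h𝒜', hfree, L, hL, -, hcard⟩ := exists_subset_forall_not_isShortOddSubfamily h
  have hlen : L.length ≤ n := by simpa using hL.length_le_card
  refine ⟨𝒜', h𝒜', ?_, fun k' hk' hk'k => ?_⟩
  · calc 𝒜.card ≤ 𝒜'.card + L.length * (k - 1) := hcard
      _ ≤ 𝒜'.card + (k - 1) * n := by rw [mul_comm]; gcongr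
  · rcases hk'k.lt_or_eq with hlt | rfl
    · exact isKWiseEventown_of_forall_not_isShortOddSubfamily hfree hk' hlt
    · exact IsKWiseEventown.mono h h𝒜'
end

section
/- Let ℓ be a prime and suppose ℓ divides n. Let A_1, ..., A_m be subsets of [n] forming a strong (k−1)-wise ℓ-eventown, where k is odd. For each i define B_i ⊆ [2n] by B_i = A_i ∪ {x + n : x ∈ [n] \ A_i}. Then B_1, ..., B_m form a strong k-wise ℓ-eventown on [2n]. -/
/-- Step-up lemma: doubling the universe turns a strong (k-1)-wise ℓ-eventown into a
strong k-wise ℓ-eventown when k is odd and ℓ ∣ n. -/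
theorem stepup_lemma (ℓ n k : ℕ) (hℓ : ℓ.Prime) (hln : ℓ ∣ n) (hk : Odd k)
    (𝒜 : Finset (Finset ℕ)) (hsub : ∀ A ∈ 𝒜, A ⊆ Finset.Icc 1 n)
    (hstrong : ∀ S : Finset (Finset ℕ), S ⊆ 𝒜 → ∀ hS : S.Nonempty,
      S.card ≤ k - 1 → ℓ ∣ (S.inf' hS id).card) :
    ∀ S : Finset (Finset ℕ),
      S ⊆ 𝒜.image (fun A => A ∪ ((Finset.Icc 1 n \ A).image (· + n))) →
      ∀ hS : S.Nonempty, S.card ≤ k → ℓ ∣ (S.inf' hS id).card := by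
  classical
  intro S hSsub hS hSk
  have hn0 : (n : ZMod ℓ) = 0 := (ZMod.natCast_eq_zero_iff n ℓ).mpr hln
  set I : Finset ℕ := Finset.Icc 1 n with hIdef
  set b : Finset ℕ → Finset ℕ := fun A => A ∪ ((I \ A).image (· + n)) with hbdef
  set T : Finset (Finset ℕ) := 𝒜.filter (fun A => b A ∈ S) with hTdef
  have hTsub : T ⊆ 𝒜 := Finset.filter_subset _ _
  have hTI : ∀ A ∈ T, A ⊆ I := fun A hA => hsub A (hTsub hA)
  have hbmem : ∀ A x, x ∈ b A ↔ x ∈ A ∨ ∃ y, y ∈ I ∧ y ∉ A ∧ y + n = x := by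
    intro A x
    simp [hbdef, Finset.mem_union, Finset.mem_image, Finset.mem_sdiff]
    tauto
  have himg : T.image b = S := by
    apply Finset.Subset.antisymm
    · intro s hs
      obtain ⟨A, hA, rfl⟩ := Finset.mem_image.1 hs
      exact (Finset.mem_filter.1 hA).2
    · intro s hs
      obtain ⟨A, hA, rfl⟩ := Finset.mem_image.1 (hSsub hs)
      exact Finset.mem_image.2 ⟨A, Finset.mem_filter.2 ⟨hA, hs⟩, rfl⟩
  have hinj : Set.InjOn b T := by
    intro A hA A' hA' h
    have hAI := hTI A hA
    have hA'I := hTI A' hA'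
    ext x
    constructor
    · intro hx
      have hxn : x ≤ n := (Finset.mem_Icc.1 (hAI hx)).2
      have hxb : x ∈ b A' := by rw [← h]; exact Finset.mem_union_left _ hx
      rcases (hbmem A' x).1 hxb with h1 | ⟨y, hy, _, rfl⟩
      · exact h1
      · have := (Finset.mem_Icc.1 hy).1; omega
    · intro hx
      have hxn : x ≤ n := (Finset.mem_Icc.1 (hA'I hx)).2
      have hxb : x ∈ b A := by rw [h]; exact Finset.mem_union_left _ hx
      rcases (hbmem A x).1 hxb with h1 | ⟨y, hy, _, rfl⟩
      · exact h1
      · have := (Finset.mem_Icc.1 hy).1; omega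
  have hTcard : T.card = S.card := by rw [← himg, Finset.card_image_of_injOn hinj]
  have hTne : T.Nonempty := by
    obtain ⟨s, hs⟩ := hS
    rw [← himg] at hs
    obtain ⟨A, hA, -⟩ := Finset.mem_image.1 hs
    exact ⟨A, hA⟩
  have hinfS : S.inf' hS id = T.inf' hTne b := by
    ext x
    simp only [Finset.mem_inf', ← himg, Finset.mem_image, id]
    constructor
    · intro h A hA; exact h _ ⟨A, hA, rfl⟩
    · rintro h s ⟨A, hA, rfl⟩; exact h A hA
  set X : Finset ℕ := T.inf' hTne id with hXdef
  set U : Finset ℕ := T.biUnion id with hUdef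
  have hstruct : T.inf' hTne b = X ∪ ((I \ U).image (· + n)) := by
    ext x
    simp only [Finset.mem_inf', Finset.mem_union, hXdef, Finset.mem_image,
      Finset.mem_sdiff, hUdef, Finset.mem_biUnion, id]
    constructor
    · intro h
      by_cases hxn : x ≤ n
      · left
        intro A hA
        rcases (hbmem A x).1 (h A hA) with h1 | ⟨y, hy, _, rfl⟩
        · exact h1
        · have := (Finset.mem_Icc.1 hy).1; omega
      · right
        obtain ⟨A0, hA0⟩ := hTne
        rcases (hbmem A0 x).1 (h A0 hA0) with h1 | ⟨y, hy, hyA0, rfl⟩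
        · exact absurd ((Finset.mem_Icc.1 (hTI A0 hA0 h1)).2) hxn
        · refine ⟨y, ⟨hy, ?_⟩, rfl⟩
          rintro ⟨A, hA, hyA⟩
          rcases (hbmem A (y + n)).1 (h A hA) with h1 | ⟨z, hz, hzA, hzy⟩
          · have := (Finset.mem_Icc.1 (hTI A hA h1)).2
            have := (Finset.mem_Icc.1 hy).1; omega
          · have : z = y := by omega
            exact hzA (this ▸ hyA)
    · rintro (h | ⟨y, ⟨hy, hyU⟩, rfl⟩)
      · intro A hA
        exact (hbmem A x).2 (Or.inl (h A hA))
      · intro A hA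
        exact (hbmem A (y + n)).2 (Or.inr ⟨y, hy, fun hyA => hyU ⟨A, hA, hyA⟩, rfl⟩)
  obtain ⟨A0, hA0⟩ := hTne
  have hXI : X ⊆ I := fun x hx => hTI A0 hA0 (Finset.inf'_le id hA0 hx)
  have hUI : U ⊆ I := Finset.biUnion_subset.2 hTI
  have hIcard : I.card = n := by simp [hIdef]
  have hUn : U.card ≤ n := hIcard ▸ Finset.card_le_card hUI
  have hdisj : Disjoint X ((I \ U).image (· + n)) := by
    rw [Finset.disjoint_left]
    intro x hx hx'
    obtain ⟨y, hy, rfl⟩ := Finset.mem_image.1 hx'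
    have h1 := (Finset.mem_Icc.1 ((Finset.mem_sdiff.1 hy).1)).1
    have h2 := (Finset.mem_Icc.1 (hXI hx)).2
    omega
  have hcards : (S.inf' hS id).card = X.card + (n - U.card) := by
    rw [hinfS, hstruct, Finset.card_union_of_disjoint hdisj,
      Finset.card_image_of_injective _ (add_left_injective n),
      Finset.card_sdiff_of_subset hUI, hIcard]
  rw [hcards, ← ZMod.natCast_eq_zero_iff]
  push_cast [Nat.cast_sub hUn]
  -- inclusion-exclusion
  have hIE := Finset.inclusion_exclusion_card_biUnion T (id : Finset ℕ → Finset ℕ)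
  have hIEZ : (U.card : ZMod ℓ) = ∑ t : (T.powerset.filter (·.Nonempty)),
      (-1 : ZMod ℓ) ^ (t.1.card + 1) * ((t.1.inf' (Finset.mem_filter.1 t.2).2 id).card : ZMod ℓ) := by
    have := congrArg (fun z : ℤ => (z : ZMod ℓ)) hIE
    push_cast at this
    exact this
  have hTB : T ∈ T.powerset.filter (·.Nonempty) :=
    Finset.mem_filter.2 ⟨Finset.mem_powerset.2 (Finset.Subset.refl T), ⟨A0, hA0⟩⟩
  have hsum : (U.card : ZMod ℓ) = (-1 : ZMod ℓ) ^ (T.card + 1) * (X.card : ZMod ℓ) := by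
    rw [hIEZ]
    refine Finset.sum_eq_single_of_mem (⟨T, hTB⟩ : {x // x ∈ T.powerset.filter (·.Nonempty)}) (Finset.mem_univ _) ?_
    intro t _ ht
    have h1 := Finset.mem_filter.1 t.2
    have hsubT : t.1 ⊆ T := Finset.mem_powerset.1 h1.1
    have hne : t.1 ≠ T := fun h => ht (Subtype.ext h)
    have hlt : t.1.card < T.card := Finset.card_lt_card (hsubT.ssubset_of_ne hne)
    have hle : t.1.card ≤ k - 1 := by
      have := hTcard ▸ hSk
      omega
    have hdvd := hstrong t.1 (hsubT.trans hTsub) h1.2 hle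
    rw [(ZMod.natCast_eq_zero_iff _ ℓ).2 hdvd, mul_zero]
  rw [hn0, hsum]
  by_cases hTk : T.card = k
  · have : (-1 : ZMod ℓ) ^ (T.card + 1) = 1 := by
      rw [hTk]
      exact Even.neg_one_pow hk.add_one
    rw [this]
    ring
  · have hle : T.card ≤ k - 1 := by
      have h1 : S.card ≤ k := hSk
      omega
    have hX0 : (X.card : ZMod ℓ) = 0 :=
      (ZMod.natCast_eq_zero_iff _ ℓ).2 (hstrong T hTsub ⟨A0, hA0⟩ hle)
    rw [hX0]
    ring
end

section
/- Let ℓ be a prime. If A is a family of distinct subsets of [n] such that every A ∈ A has |A| not divisible by ℓ, and for every A ∈ A there is at most one B ∈ A \ {A} with |A ∩ B| not divisible by ℓ, then |A| ≤ max{n, 2n − 4}. -/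
open Matrix Finset

private lemma sum_dotProduct' {K : Type*} [CommRing K] {m ι : Type*} [Fintype m]
    (s : Finset ι) (f : ι → m → K) (v : m → K) :
    (∑ i ∈ s, f i) ⬝ᵥ v = ∑ i ∈ s, f i ⬝ᵥ v := by
  simp only [dotProduct, Finset.sum_apply, Finset.sum_mul]
  exact Finset.sum_comm

private lemma indep_card_le {K : Type*} [Field K] {n : ℕ} {ι : Type*} [Fintype ι]
    {f : ι → (Fin n → K)} (h : LinearIndependent K f) : Fintype.card ι ≤ n := by
  have := h.fintype_card_le_finrank
  simpa [Module.finrank_pi] using this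

private lemma orth_card_add_two_le {K : Type*} [Field K] {n : ℕ} {ι : Type*} [Fintype ι]
    (f : ι → (Fin n → K)) (horth : ∀ i j, i ≠ j → f i ⬝ᵥ f j = 0)
    (hnorm : ∀ i, f i ⬝ᵥ f i ≠ 0) (c : Fin n → K) (hc0 : c ≠ 0)
    (hcf : ∀ i, c ⬝ᵥ f i = 0) (hcc : c ⬝ᵥ c = 0) :
    Fintype.card ι + 2 ≤ n := by
  classical
  let φ : (Fin n → K) →ₗ[K] K :=
    { toFun := fun v => c ⬝ᵥ v
      map_add' := fun x y => dotProduct_add c x y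
      map_smul' := fun m x => by simp [dotProduct_smul, smul_eq_mul] }
  have hmemf : ∀ i, f i ∈ LinearMap.ker φ := fun i => by
    simpa [φ, LinearMap.mem_ker] using hcf i
  have hmemc : c ∈ LinearMap.ker φ := by simpa [φ, LinearMap.mem_ker] using hcc
  set g : Option ι → LinearMap.ker φ :=
    fun o => Option.elim o ⟨c, hmemc⟩ (fun i => ⟨f i, hmemf i⟩) with hg
  have hli : LinearIndependent K fun o => ((g o : Fin n → K)) := by
    rw [Fintype.linearIndependent_iff]
    intro α hα
    have hsum : (α none) • c + ∑ i, (α (some i)) • f i = 0 := by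
      simpa [Fintype.sum_option, hg] using hα
    have hz : ∀ j, α (some j) = 0 := by
      intro j
      have h2 := congrArg (fun v => v ⬝ᵥ f j) hsum
      simp only [add_dotProduct, zero_dotProduct] at h2
      rw [sum_dotProduct'] at h2
      simp only [smul_dotProduct, smul_eq_mul] at h2
      rw [Finset.sum_eq_single j (fun i _ hij => by
        rw [horth i j hij, mul_zero]) (by simp)] at h2
      rw [hcf j, mul_zero, zero_add] at h2
      exact (mul_eq_zero.mp h2).resolve_right (hnorm j)
    have hn : α none = 0 := by
      simp only [hz, zero_smul, Finset.sum_const_zero, add_zero] at hsum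
      rcases smul_eq_zero.mp hsum with h | h
      · exact h
      · exact absurd h hc0
    intro o
    cases o with
    | none => exact hn
    | some j => exact hz j
  have hli2 : LinearIndependent K g := LinearIndependent.of_comp (LinearMap.ker φ).subtype hli
  have hcard := hli2.fintype_card_le_finrank
  have hrank := LinearMap.finrank_range_add_finrank_ker φ
  have hsurj : LinearMap.range φ = ⊤ := by
    obtain ⟨j, hj⟩ := Function.ne_iff.mp hc0
    rw [LinearMap.range_eq_top]
    intro y
    refine ⟨Pi.single j (y * (c j)⁻¹), ?_⟩
    simp only [φ, LinearMap.coe_mk, AddHom.coe_mk, dotProduct_single]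
    have hcj : c j ≠ 0 := by simpa using hj
    field_simp
  rw [hsurj, finrank_top] at hrank
  simp only [Module.finrank_self, Module.finrank_pi, Fintype.card_fin] at hrank
  rw [Fintype.card_option] at hcard
  omega

/-- A 1-defect ℓ-oddtown in [n] has size at most max{n, 2n - 4}, for ℓ prime. -/
theorem one_defect_ell_oddtown (ℓ n : ℕ) (hℓ : ℓ.Prime) (𝒜 : Finset (Finset (Fin n)))
    (hsize : ∀ A ∈ 𝒜, ¬ ℓ ∣ A.card)
    (hdefect : ∀ A ∈ 𝒜, ((𝒜.erase A).filter fun B => ¬ ℓ ∣ (A ∩ B).card).card ≤ 1) :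
    𝒜.card ≤ max n (2 * n - 4) := by
  classical
  haveI : Fact ℓ.Prime := ⟨hℓ⟩
  set K := ZMod ℓ with hK
  set χ : Finset (Fin n) → (Fin n → K) := fun A i => if i ∈ A then 1 else 0 with hχ
  have hdot : ∀ A B : Finset (Fin n), χ A ⬝ᵥ χ B = ((A ∩ B).card : K) := by
    intro A B
    have h1 : ∀ i, χ A i * χ B i = if i ∈ A ∩ B then (1 : K) else 0 := by
      intro i
      by_cases hiA : i ∈ A <;> by_cases hiB : i ∈ B <;>
        simp [hχ, hiA, hiB, Finset.mem_inter]
    simp only [dotProduct, h1, Finset.sum_boole, Finset.filter_univ_mem]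
  have hd0 : ∀ A B : Finset (Fin n), (¬ ℓ ∣ (A ∩ B).card) ↔ χ A ⬝ᵥ χ B ≠ 0 := by
    intro A B
    rw [hdot, Ne, ZMod.natCast_eq_zero_iff]
  have hself : ∀ A ∈ 𝒜, χ A ⬝ᵥ χ A ≠ 0 := by
    intro A hA
    rw [← hd0]
    simpa using hsize A hA
  have hsymm : ∀ A B, χ A ⬝ᵥ χ B = χ B ⬝ᵥ χ A := fun A B => dotProduct_comm _ _
  have hbadsymm : ∀ A B : Finset (Fin n), ¬ ℓ ∣ (A ∩ B).card → ¬ ℓ ∣ (B ∩ A).card := by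
    intro A B h
    rwa [Finset.inter_comm]
  have U : ∀ A ∈ 𝒜, ∀ B ∈ 𝒜, ∀ B' ∈ 𝒜, B ≠ A → B' ≠ A →
      ¬ ℓ ∣ (A ∩ B).card → ¬ ℓ ∣ (A ∩ B').card → B = B' := by
    intro A hA B hB B' hB' hne hne' h1 h2
    have h := Finset.card_le_one.mp (hdefect A hA)
    exact h B (by simp [Finset.mem_filter, Finset.mem_erase, hne, hB, h1])
      B' (by simp [Finset.mem_filter, Finset.mem_erase, hne', hB', h2])
  by_cases hcase : ∃ A ∈ 𝒜, ∃ B ∈ 𝒜, B ≠ A ∧ ¬ ℓ ∣ (A ∩ B).card ∧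
      (χ A ⬝ᵥ χ A) * (χ B ⬝ᵥ χ B) = (χ A ⬝ᵥ χ B) * (χ A ⬝ᵥ χ B)
  · -- degenerate pair exists: bound 2n - 4
    obtain ⟨A, hA, B, hB, hBA, hbad, hdet⟩ := hcase
    set e : Finset (Fin n) → ℕ := fun S => ((Fintype.equivFin (Finset (Fin n))) S : ℕ) with he
    have einj : Function.Injective e := by
      intro x y hxy
      exact (Fintype.equivFin (Finset (Fin n))).injective (Fin.val_injective hxy)
    set C := 𝒜.filter (fun X => ∀ Y ∈ 𝒜, Y ≠ X → ¬ ℓ ∣ (X ∩ Y).card → e X < e Y) with hC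
    have hCsub : C ⊆ 𝒜 := Finset.filter_subset _ _
    have hCorth : ∀ X ∈ C, ∀ Y ∈ C, X ≠ Y → χ X ⬝ᵥ χ Y = 0 := by
      intro X hX Y hY hne
      by_contra h
      have hXY : ¬ ℓ ∣ (X ∩ Y).card := (hd0 X Y).mpr h
      obtain ⟨hX𝒜, hPX⟩ := Finset.mem_filter.mp hX
      obtain ⟨hY𝒜, hPY⟩ := Finset.mem_filter.mp hY
      exact lt_asymm (hPX Y hY𝒜 (Ne.symm hne) hXY) (hPY X hX𝒜 hne (hbadsymm _ _ hXY))
    -- |𝒜| ≤ 2 |C|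
    have hmap : ∀ X ∈ 𝒜 \ C, ∃ Y, Y ∈ 𝒜 ∧ Y ≠ X ∧ ¬ ℓ ∣ (X ∩ Y).card ∧ e Y < e X := by
      intro X hX
      rw [Finset.mem_sdiff, hC, Finset.mem_filter] at hX
      obtain ⟨hX𝒜, hnP⟩ := hX
      push_neg at hnP
      obtain ⟨Y, hY𝒜, hYX, hbadXY, hle⟩ := hnP hX𝒜
      refine ⟨Y, hY𝒜, hYX, hbadXY, ?_⟩
      rcases lt_or_eq_of_le hle with h | h
      · exact h
      · exact absurd (einj h) hYX
    set p : Finset (Fin n) → Finset (Fin n) := fun X =>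
      if h : ∃ Y, Y ∈ 𝒜 ∧ Y ≠ X ∧ ¬ ℓ ∣ (X ∩ Y).card ∧ e Y < e X then h.choose else ∅
      with hp
    have hpspec : ∀ X ∈ 𝒜 \ C,
        p X ∈ 𝒜 ∧ p X ≠ X ∧ ¬ ℓ ∣ (X ∩ p X).card ∧ e (p X) < e X := by
      intro X hX
      have h := hmap X hX
      rw [hp]
      simp only [dif_pos h]
      exact h.choose_spec
    have hpC : ∀ X ∈ 𝒜 \ C, p X ∈ C := by
      intro X hX
      obtain ⟨h1, h2, h3, h4⟩ := hpspec X hX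
      have hX𝒜 : X ∈ 𝒜 := (Finset.mem_sdiff.mp hX).1
      rw [hC, Finset.mem_filter]
      refine ⟨h1, fun Y hY𝒜 hYne hbadY => ?_⟩
      have : Y = X := U (p X) h1 Y hY𝒜 X hX𝒜 hYne (Ne.symm h2) hbadY (hbadsymm _ _ h3)
      rw [this]
      exact h4
    have hinj : Set.InjOn p (𝒜 \ C : Finset (Finset (Fin n))) := by
      intro X₁ hX₁ X₂ hX₂ hpe
      simp only [Finset.coe_sdiff, Set.mem_diff, Finset.mem_coe] at hX₁ hX₂
      have hX₁' : X₁ ∈ 𝒜 \ C := Finset.mem_sdiff.mpr ⟨hX₁.1, fun h => hX₁.2 h⟩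
      have hX₂' : X₂ ∈ 𝒜 \ C := Finset.mem_sdiff.mpr ⟨hX₂.1, fun h => hX₂.2 h⟩
      obtain ⟨h1, h2, h3, _⟩ := hpspec X₁ hX₁'
      obtain ⟨h1', h2', h3', _⟩ := hpspec X₂ hX₂'
      rw [← hpe] at h2' h3'
      exact U (p X₁) h1 X₁ hX₁.1 X₂ hX₂.1 (Ne.symm h2) (Ne.symm h2')
        (hbadsymm _ _ h3) (hbadsymm _ _ h3')
    have hcard2 : 𝒜.card ≤ 2 * C.card := by
      have h1 : (𝒜 \ C).card ≤ C.card := by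
        apply Finset.card_le_card_of_injOn p (fun X hX => hpC X hX) hinj
      have h2 : (𝒜 \ C).card + C.card = 𝒜.card := Finset.card_sdiff_add_card_eq_card hCsub
      omega
    -- the isotropic vector
    set c : Fin n → K := (χ A ⬝ᵥ χ B) • χ A - (χ A ⬝ᵥ χ A) • χ B with hc
    have hABne : χ A ⬝ᵥ χ B ≠ 0 := (hd0 A B).mp hbad
    have hcd : ∀ v : Fin n → K,
        c ⬝ᵥ v = (χ A ⬝ᵥ χ B) * (χ A ⬝ᵥ v) - (χ A ⬝ᵥ χ A) * (χ B ⬝ᵥ v) := by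
      intro v
      rw [hc, sub_dotProduct, smul_dotProduct, smul_dotProduct]
      simp [smul_eq_mul]
    have hcA : c ⬝ᵥ χ A = 0 := by
      rw [hcd, hsymm B A]
      ring
    have hcB : c ⬝ᵥ χ B = 0 := by
      rw [hcd, hdet]
      ring
    have hcc : c ⬝ᵥ c = 0 := by
      rw [hc, dotProduct_sub, dotProduct_smul, dotProduct_smul]
      simp only [smul_eq_mul]
      rw [show ((χ A ⬝ᵥ χ B) • χ A - (χ A ⬝ᵥ χ A) • χ B) ⬝ᵥ χ A = 0 from hcA,
        show ((χ A ⬝ᵥ χ B) • χ A - (χ A ⬝ᵥ χ A) • χ B) ⬝ᵥ χ B = 0 from hcB]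
      ring
    have hc0 : c ≠ 0 := by
      intro hzero
      apply hBA
      apply Finset.ext
      intro i
      have hi := congrFun hzero i
      rw [hc] at hi
      simp only [Pi.sub_apply, Pi.smul_apply, smul_eq_mul, Pi.zero_apply, hχ] at hi
      constructor
      · intro hiB
        by_contra hiA
        rw [if_pos hiB, if_neg hiA, mul_zero, mul_one, zero_sub, neg_eq_zero] at hi
        exact hself A hA hi
      · intro hiA
        by_contra hiB
        rw [if_pos hiA, if_neg hiB, mul_one, mul_zero, sub_zero] at hi
        exact hABne hi
    have hcC : ∀ D ∈ C, c ⬝ᵥ χ D = 0 := by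
      intro D hD
      have hD𝒜 : D ∈ 𝒜 := hCsub hD
      by_cases hDA : D = A
      · rw [hDA]; exact hcA
      by_cases hDB : D = B
      · rw [hDB]; exact hcB
      have hAD : χ A ⬝ᵥ χ D = 0 := by
        by_contra h
        exact hDB (U A hA D hD𝒜 B hB hDA hBA ((hd0 A D).mpr h) hbad)
      have hBD : χ B ⬝ᵥ χ D = 0 := by
        by_contra h
        exact hDA (U B hB D hD𝒜 A hA hDB (Ne.symm hBA) ((hd0 B D).mpr h)
          (hbadsymm A B hbad))
      rw [hcd, hAD, hBD]
      ring
    have hkey : C.card + 2 ≤ n := by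
      have := orth_card_add_two_le (fun X : ↥C => χ (X : Finset (Fin n)))
        (fun X Y hne => hCorth X X.2 Y Y.2 (fun h => hne (Subtype.ext h)))
        (fun X => hself X (hCsub X.2)) c hc0 (fun X => hcC X X.2) hcc
      simpa [Fintype.card_coe] using this
    have : 𝒜.card ≤ 2 * n - 4 := by omega
    exact le_trans this (le_max_right _ _)
  · -- all pairs nondegenerate: full linear independence, bound n
    push_neg at hcase
    have hli : LinearIndependent K (fun X : ↥𝒜 => χ (X : Finset (Fin n))) := by
      rw [Fintype.linearIndependent_iff]
      intro g hg j
      obtain ⟨A, hA⟩ := j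
      have hdotall : ∀ D : Finset (Fin n),
          (∑ X : ↥𝒜, g X • χ (X : Finset (Fin n))) ⬝ᵥ χ D
            = ∑ X : ↥𝒜, g X * (χ (X : Finset (Fin n)) ⬝ᵥ χ D) := by
        intro D
        rw [sum_dotProduct']
        simp [smul_dotProduct, smul_eq_mul]
      by_cases hp : ∃ B ∈ 𝒜, B ≠ A ∧ ¬ ℓ ∣ (A ∩ B).card
      · obtain ⟨B, hB, hBA, hbad⟩ := hp
        have hdet := hcase A hA B hB hBA hbad
        set jB : ↥𝒜 := ⟨B, hB⟩ with hjB
        have hne : (⟨A, hA⟩ : ↥𝒜) ≠ jB := fun h => hBA (by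
          rw [hjB] at h
          exact (congrArg Subtype.val h).symm)
        have hzero : ∀ D ∈ 𝒜, D ≠ A → D ≠ B → χ D ⬝ᵥ χ A = 0 ∧ χ D ⬝ᵥ χ B = 0 := by
          intro D hD hDA hDB
          constructor
          · by_contra h
            exact hDB (U A hA D hD B hB hDA hBA
              (hbadsymm D A ((hd0 D A).mpr h)) hbad)
          · by_contra h
            exact hDA (U B hB D hD A hA hDB (Ne.symm hBA)
              (hbadsymm D B ((hd0 D B).mpr h)) (hbadsymm A B hbad))
        have hsum2 : ∀ D : Finset (Fin n),
            (∀ X : ↥𝒜, (X : Finset (Fin n)) ≠ A → (X : Finset (Fin n)) ≠ B →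
              χ (X : Finset (Fin n)) ⬝ᵥ χ D = 0) →
            g ⟨A, hA⟩ * (χ A ⬝ᵥ χ D) + g jB * (χ B ⬝ᵥ χ D) = 0 := by
          intro D hvanish
          have h0 := congrArg (fun v => v ⬝ᵥ χ D) hg
          simp only [zero_dotProduct] at h0
          rw [hdotall D] at h0
          rw [← Finset.sum_subset (Finset.subset_univ {(⟨A, hA⟩ : ↥𝒜), jB})
            (fun X _ hX => by
              simp only [Finset.mem_insert, Finset.mem_singleton] at hX
              push_neg at hX
              rw [hvanish X
                (fun h => hX.1 (Subtype.ext h)) (fun h => hX.2 (Subtype.ext h)), mul_zero])]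
            at h0
          rw [Finset.sum_pair hne] at h0
          exact h0
        have eq1 := hsum2 A (fun X hXA hXB => (hzero X X.2 hXA hXB).1)
        have eq2 := hsum2 B (fun X hXA hXB => (hzero X X.2 hXA hXB).2)
        have hBAdot : χ B ⬝ᵥ χ A = χ A ⬝ᵥ χ B := hsymm B A
        rw [hBAdot] at eq1
        have hfactor : g ⟨A, hA⟩ *
            ((χ A ⬝ᵥ χ A) * (χ B ⬝ᵥ χ B) - (χ A ⬝ᵥ χ B) * (χ A ⬝ᵥ χ B))
            = (g ⟨A, hA⟩ * (χ A ⬝ᵥ χ A) + g jB * (χ A ⬝ᵥ χ B)) * (χ B ⬝ᵥ χ B)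
              - (g ⟨A, hA⟩ * (χ A ⬝ᵥ χ B) + g jB * (χ B ⬝ᵥ χ B)) * (χ A ⬝ᵥ χ B) := by
          ring
        rw [eq1, eq2, zero_mul, zero_mul, sub_zero] at hfactor
        rcases mul_eq_zero.mp hfactor with h | h
        · exact h
        · exact absurd (sub_eq_zero.mp h) hdet
      · push_neg at hp
        have h0 := congrArg (fun v => v ⬝ᵥ χ A) hg
        simp only [zero_dotProduct] at h0
        rw [hdotall A] at h0
        rw [Finset.sum_eq_single (⟨A, hA⟩ : ↥𝒜) (fun X _ hX => by
          have hXA : (X : Finset (Fin n)) ≠ A := fun h => hX (Subtype.ext h)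
          have : χ (X : Finset (Fin n)) ⬝ᵥ χ A = 0 := by
            by_contra h
            exact hbadsymm _ _ ((hd0 _ _).mpr h) (hp X X.2 hXA)
          rw [this, mul_zero]) (by simp)] at h0
        rcases mul_eq_zero.mp h0 with h | h
        · exact h
        · exact absurd h (hself A hA)
    have hcard : 𝒜.card ≤ n := by
      have := indep_card_le hli
      simpa [Fintype.card_coe] using this
    exact le_trans hcard (le_max_left _ _)
end

section
/- Let H be an (n−1)×(n−1) Hadamard matrix whose last column is the all-ones vector, with n ≡ 5 (mod 8). For j ∈ [n−2] let A_j = {i ∈ [n−1] : H_{i,j} = 1} and B_j = [n−1] \ A_j. Then the 2(n−2) sets {A_j ∪ {n}, B_j ∪ {n} : j ∈ [n−2]} form a 1-defect oddtown in [n] of size 2n − 4: each set has odd size, and each set has exactly one other set in the family with which its intersection has odd size. -/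
section HadamardAux

lemma pm_card (m : ℕ) (f : Fin m → ℤ) (hf : ∀ i, f i = 1 ∨ f i = -1)
    (hfs : ∑ i, f i = 0) :
    2 * ((Finset.univ.filter fun i => f i = 1).card : ℤ) = m := by
  have key : ∑ i, (1 + f i) = (m : ℤ) := by
    rw [Finset.sum_add_distrib, hfs]; simp
  rw [← Finset.sum_filter_add_sum_filter_not Finset.univ (fun i => f i = 1)] at key
  have h1 : ∑ i ∈ Finset.univ.filter (fun i => f i = 1), (1 + f i)
      = 2 * ((Finset.univ.filter fun i => f i = 1).card : ℤ) := by
    rw [show ∑ i ∈ Finset.univ.filter (fun i => f i = 1), (1 + f i)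
        = ∑ _i ∈ Finset.univ.filter (fun i => f i = 1), 2 from
      Finset.sum_congr rfl (fun i hi => by rw [(Finset.mem_filter.mp hi).2]; norm_num)]
    simp [mul_comm]
  have h2 : ∑ i ∈ Finset.univ.filter (fun i => ¬ f i = 1), (1 + f i) = 0 := by
    apply Finset.sum_eq_zero
    intro i hi
    have := (hf i).resolve_left (Finset.mem_filter.mp hi).2
    rw [this]; ring
  rw [h1, h2, add_zero] at key
  exact key

lemma pm_card_and (m : ℕ) (f g : Fin m → ℤ)
    (hf : ∀ i, f i = 1 ∨ f i = -1) (hg : ∀ i, g i = 1 ∨ g i = -1)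
    (hfs : ∑ i, f i = 0) (hgs : ∑ i, g i = 0) (hfg : ∑ i, f i * g i = 0) :
    4 * ((Finset.univ.filter fun i => f i = 1 ∧ g i = 1).card : ℤ) = m := by
  have key : ∑ i, (1 + f i) * (1 + g i) = (m : ℤ) := by
    have h : ∀ i : Fin m, (1 + f i) * (1 + g i) = 1 + (f i + (g i + f i * g i)) := fun i => by ring
    simp_rw [h]
    rw [Finset.sum_add_distrib, Finset.sum_add_distrib, Finset.sum_add_distrib, hfs, hgs, hfg]
    simp
  rw [← Finset.sum_filter_add_sum_filter_not Finset.univ (fun i => f i = 1 ∧ g i = 1)] at key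
  have h1 : ∑ i ∈ Finset.univ.filter (fun i => f i = 1 ∧ g i = 1), (1 + f i) * (1 + g i)
      = 4 * ((Finset.univ.filter fun i => f i = 1 ∧ g i = 1).card : ℤ) := by
    rw [show ∑ i ∈ Finset.univ.filter (fun i => f i = 1 ∧ g i = 1), (1 + f i) * (1 + g i)
        = ∑ _i ∈ Finset.univ.filter (fun i => f i = 1 ∧ g i = 1), 4 from
      Finset.sum_congr rfl (fun i hi => by
        obtain ⟨h1, h2⟩ := (Finset.mem_filter.mp hi).2
        rw [h1, h2]; ring)]
    simp [mul_comm]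
  have h2 : ∑ i ∈ Finset.univ.filter (fun i => ¬ (f i = 1 ∧ g i = 1)), (1 + f i) * (1 + g i) = 0 := by
    apply Finset.sum_eq_zero
    intro i hi
    have hne := (Finset.mem_filter.mp hi).2
    by_cases hfi : f i = 1
    · have := (hg i).resolve_left (fun h => hne ⟨hfi, h⟩)
      rw [this]; ring
    · have := (hf i).resolve_left hfi
      rw [this]; ring
  rw [h1, h2, add_zero] at key
  exact key

lemma had_card (m : ℕ) (s : Finset (Fin m)) :
    (insert (Fin.last m) (s.image Fin.castSucc)).card = s.card + 1 := by
  rw [Finset.card_insert_of_notMem, Finset.card_image_of_injective _ (Fin.castSucc_injective m)]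
  intro h
  obtain ⟨a, _, ha⟩ := Finset.mem_image.mp h
  exact (Fin.castSucc_lt_last a).ne ha

lemma had_inter (m : ℕ) (s t : Finset (Fin m)) :
    (insert (Fin.last m) (s.image Fin.castSucc) ∩ insert (Fin.last m) (t.image Fin.castSucc)) =
      insert (Fin.last m) ((s ∩ t).image Fin.castSucc) := by
  ext x
  simp only [Finset.mem_inter, Finset.mem_insert, Finset.mem_image, Finset.mem_inter]
  constructor
  · rintro ⟨h | ⟨a, ha, rfl⟩, h' | ⟨b, hb, hbe⟩⟩
    · exact Or.inl h
    · exact Or.inl h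
    · exact absurd h' (Fin.castSucc_lt_last a).ne
    · have : a = b := Fin.castSucc_injective m hbe.symm
      subst this
      exact Or.inr ⟨a, ⟨ha, hb⟩, rfl⟩
  · rintro (rfl | ⟨a, ⟨ha, hb⟩, rfl⟩)
    · exact ⟨Or.inl rfl, Or.inl rfl⟩
    · exact ⟨Or.inr ⟨a, ha, rfl⟩, Or.inr ⟨a, hb, rfl⟩⟩

lemma col_orth (m : ℕ) (H : Matrix (Fin m) (Fin m) ℤ)
    (hent : ∀ i j, H i j = 1 ∨ H i j = -1)
    (horth : ∀ i j, i ≠ j → ∑ x, H i x * H j x = 0) :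
    ∀ j k, j ≠ k → ∑ i, H i j * H i k = 0 := by
  intro j k hjk
  rcases Nat.eq_zero_or_pos m with hm | hm
  · subst hm; exact j.elim0
  set G : Matrix (Fin m) (Fin m) ℚ := H.map (Int.cast) with hG
  have h1 : G * G.transpose = (m : ℚ) • 1 := by
    ext i i'
    simp only [Matrix.mul_apply, Matrix.transpose_apply, Matrix.smul_apply, Matrix.one_apply,
      Matrix.map_apply, hG]
    by_cases h : i = i'
    · subst h
      simp only [if_pos rfl, smul_eq_mul, mul_one]
      have : ∀ x, ((H i x : ℚ)) * ((H i x : ℚ)) = 1 := by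
        intro x; rcases hent i x with h | h <;> rw [h] <;> norm_num
      rw [Finset.sum_congr rfl (fun x _ => this x)]
      simp
    · rw [if_neg h, smul_zero]
      have := horth i i' h
      have : ((∑ x, H i x * H i' x : ℤ) : ℚ) = 0 := by rw [this]; norm_num
      push_cast at this
      exact this
  have hm0 : (m : ℚ) ≠ 0 := by positivity
  have h2 : G * ((m : ℚ)⁻¹ • G.transpose) = 1 := by
    rw [Matrix.mul_smul, h1, smul_smul, inv_mul_cancel₀ hm0, one_smul]
  have h3 : ((m : ℚ)⁻¹ • G.transpose) * G = 1 := mul_eq_one_comm.mp h2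
  have h4 : G.transpose * G = (m : ℚ) • 1 := by
    have := congrArg (fun M => (m : ℚ) • M) h3
    simp only [Matrix.smul_mul, smul_smul, mul_inv_cancel₀ hm0, one_smul] at this
    exact this
  have h5 : (G.transpose * G) j k = 0 := by
    rw [h4]
    simp [Matrix.one_apply, hjk]
  rw [Matrix.mul_apply] at h5
  simp only [Matrix.transpose_apply, Matrix.map_apply, hG] at h5
  exact_mod_cast h5

end HadamardAux


/-- The set A_j ∪ {n} from column j of a Hadamard matrix of order m = n - 1,
as a subset of Fin (m+1): the rows i with H i j = 1, together with the extra element. -/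
def hadamardSetA (m : ℕ) (H : Matrix (Fin m) (Fin m) ℤ) (j : Fin m) : Finset (Fin (m + 1)) :=
  insert (Fin.last m) ((Finset.univ.filter fun i => H i j = 1).image Fin.castSucc)

/-- The set B_j ∪ {n}: the complementary rows, together with the extra element. -/
def hadamardSetB (m : ℕ) (H : Matrix (Fin m) (Fin m) ℤ) (j : Fin m) : Finset (Fin (m + 1)) :=
  insert (Fin.last m) ((Finset.univ.filter fun i => H i j ≠ 1).image Fin.castSucc)

/-- The Hadamard construction of a 1-defect oddtown of size 2n - 4 in [n], n ≡ 5 (mod 8).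
Here n = m + 1, the matrix H is an m × m Hadamard matrix whose last column c is all ones. -/
theorem hadamard_one_defect_oddtown (m : ℕ) (hm : (m + 1) % 8 = 5)
    (H : Matrix (Fin m) (Fin m) ℤ)
    (hent : ∀ i j, H i j = 1 ∨ H i j = -1)
    (horth : ∀ i j, i ≠ j → ∑ x, H i x * H j x = 0)
    (c : Fin m) (hclast : (c : ℕ) = m - 1) (hc : ∀ i, H i c = 1) :
    (((Finset.univ.erase c).image (hadamardSetA m H)) ∪
        ((Finset.univ.erase c).image (hadamardSetB m H))).card = 2 * (m + 1) - 4 ∧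
    (∀ X ∈ ((Finset.univ.erase c).image (hadamardSetA m H)) ∪
        ((Finset.univ.erase c).image (hadamardSetB m H)), Odd X.card) ∧
    (∀ X ∈ ((Finset.univ.erase c).image (hadamardSetA m H)) ∪
        ((Finset.univ.erase c).image (hadamardSetB m H)),
      (((((Finset.univ.erase c).image (hadamardSetA m H)) ∪
          ((Finset.univ.erase c).image (hadamardSetB m H))).erase X).filter
        fun Y => Odd (X ∩ Y).card).card = 1) := by
  classical
  obtain ⟨s, hs⟩ : ∃ s, m = 8 * s + 4 := ⟨m / 8, by omega⟩
  have col := col_orth m H hent horth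
  have hcne : ∀ j : Fin m, j ≠ c → ∑ i, H i j = 0 := by
    intro j hj
    have h := col j c hj
    simpa [hc] using h
  -- card of basic filters
  have hcA : ∀ j : Fin m, j ≠ c → (Finset.univ.filter fun i => H i j = 1).card = 4 * s + 2 := by
    intro j hj
    have h := pm_card m (fun i => H i j) (fun i => hent i j) (hcne j hj)
    beta_reduce at h
    omega
  have hBfilter : ∀ j : Fin m, (Finset.univ.filter fun i => H i j ≠ 1)
      = (Finset.univ.filter fun i => -H i j = 1) := by
    intro j
    apply Finset.filter_congr
    intro i _
    rcases hent i j with h | h <;> simp [h]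
  have hcB : ∀ j : Fin m, j ≠ c → (Finset.univ.filter fun i => H i j ≠ 1).card = 4 * s + 2 := by
    intro j hj
    rw [hBfilter j]
    have h := pm_card m (fun i => -H i j)
      (fun i => by rcases hent i j with h | h <;> simp [h])
      (by rw [Finset.sum_neg_distrib, hcne j hj, neg_zero])
    beta_reduce at h
    omega
  -- intersection cards
  have hIAA : ∀ j k : Fin m, j ≠ c → k ≠ c → j ≠ k →
      ((Finset.univ.filter fun i => H i j = 1) ∩ (Finset.univ.filter fun i => H i k = 1)).card
        = 2 * s + 1 := by
    intro j k hj hk hjk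
    rw [← Finset.filter_and]
    have h := pm_card_and m (fun i => H i j) (fun i => H i k)
      (fun i => hent i j) (fun i => hent i k) (hcne j hj) (hcne k hk) (col j k hjk)
    beta_reduce at h
    omega
  have hIAB : ∀ j k : Fin m, j ≠ c → k ≠ c → j ≠ k →
      ((Finset.univ.filter fun i => H i j = 1) ∩ (Finset.univ.filter fun i => H i k ≠ 1)).card
        = 2 * s + 1 := by
    intro j k hj hk hjk
    rw [hBfilter k, ← Finset.filter_and]
    have h := pm_card_and m (fun i => H i j) (fun i => -H i k)
      (fun i => hent i j) (fun i => by rcases hent i k with h | h <;> simp [h])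
      (hcne j hj)
      (by rw [Finset.sum_neg_distrib, hcne k hk, neg_zero])
      (by simp only [mul_neg]; rw [Finset.sum_neg_distrib, col j k hjk, neg_zero])
    beta_reduce at h
    omega
  have hIBA : ∀ j k : Fin m, j ≠ c → k ≠ c → j ≠ k →
      ((Finset.univ.filter fun i => H i j ≠ 1) ∩ (Finset.univ.filter fun i => H i k = 1)).card
        = 2 * s + 1 := by
    intro j k hj hk hjk
    rw [Finset.inter_comm]
    exact hIAB k j hk hj (Ne.symm hjk)
  have hIBB : ∀ j k : Fin m, j ≠ c → k ≠ c → j ≠ k →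
      ((Finset.univ.filter fun i => H i j ≠ 1) ∩ (Finset.univ.filter fun i => H i k ≠ 1)).card
        = 2 * s + 1 := by
    intro j k hj hk hjk
    rw [hBfilter j, hBfilter k, ← Finset.filter_and]
    have h := pm_card_and m (fun i => -H i j) (fun i => -H i k)
      (fun i => by rcases hent i j with h | h <;> simp [h])
      (fun i => by rcases hent i k with h | h <;> simp [h])
      (by rw [Finset.sum_neg_distrib, hcne j hj, neg_zero])
      (by rw [Finset.sum_neg_distrib, hcne k hk, neg_zero])
      (by simp only [neg_mul_neg]; exact col j k hjk)
    beta_reduce at h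
    omega
  have hIABj : ∀ j : Fin m,
      ((Finset.univ.filter fun i => H i j = 1) ∩ (Finset.univ.filter fun i => H i j ≠ 1)).card
        = 0 := by
    intro j
    rw [Finset.card_eq_zero]
    ext i
    simp
  -- hadamard-level cards
  have hcardA : ∀ j : Fin m, j ≠ c → (hadamardSetA m H j).card = 4 * s + 3 := by
    intro j hj
    unfold hadamardSetA
    rw [had_card, hcA j hj]
  have hcardB : ∀ j : Fin m, j ≠ c → (hadamardSetB m H j).card = 4 * s + 3 := by
    intro j hj
    unfold hadamardSetB
    rw [had_card, hcB j hj]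
  have hiAA : ∀ j k : Fin m, j ≠ c → k ≠ c → j ≠ k →
      (hadamardSetA m H j ∩ hadamardSetA m H k).card = 2 * s + 2 := by
    intro j k hj hk hjk
    unfold hadamardSetA
    rw [had_inter, had_card, hIAA j k hj hk hjk]
  have hiAB : ∀ j k : Fin m, j ≠ c → k ≠ c → j ≠ k →
      (hadamardSetA m H j ∩ hadamardSetB m H k).card = 2 * s + 2 := by
    intro j k hj hk hjk
    unfold hadamardSetA hadamardSetB
    rw [had_inter, had_card, hIAB j k hj hk hjk]
  have hiBA : ∀ j k : Fin m, j ≠ c → k ≠ c → j ≠ k →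
      (hadamardSetB m H j ∩ hadamardSetA m H k).card = 2 * s + 2 := by
    intro j k hj hk hjk
    unfold hadamardSetA hadamardSetB
    rw [had_inter, had_card, hIBA j k hj hk hjk]
  have hiBB : ∀ j k : Fin m, j ≠ c → k ≠ c → j ≠ k →
      (hadamardSetB m H j ∩ hadamardSetB m H k).card = 2 * s + 2 := by
    intro j k hj hk hjk
    unfold hadamardSetB
    rw [had_inter, had_card, hIBB j k hj hk hjk]
  have hiABsame : ∀ j : Fin m, (hadamardSetA m H j ∩ hadamardSetB m H j).card = 1 := by
    intro j
    unfold hadamardSetA hadamardSetB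
    rw [had_inter, had_card, hIABj j]
  have hiBAsame : ∀ j : Fin m, (hadamardSetB m H j ∩ hadamardSetA m H j).card = 1 := by
    intro j
    rw [Finset.inter_comm]
    exact hiABsame j
  -- distinctness
  have hneAB : ∀ j k : Fin m, j ≠ c → k ≠ c → hadamardSetA m H j ≠ hadamardSetB m H k := by
    intro j k hj hk heq
    have h1 := congrArg Finset.card (congrArg (· ∩ hadamardSetB m H k) heq)
    simp only [Finset.inter_self] at h1
    rw [hcardB k hk] at h1
    by_cases hjk : j = k
    · subst hjk
      rw [hiABsame j] at h1
      omega
    · rw [hiAB j k hj hk hjk] at h1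
      omega
  -- membership characterization
  set F := (((Finset.univ.erase c).image (hadamardSetA m H)) ∪
      ((Finset.univ.erase c).image (hadamardSetB m H))) with hF
  have hmemF : ∀ X, X ∈ F ↔ ∃ j, j ≠ c ∧ (X = hadamardSetA m H j ∨ X = hadamardSetB m H j) := by
    intro X
    constructor
    · intro hX
      rcases Finset.mem_union.mp hX with h | h <;>
        obtain ⟨j, hj, rfl⟩ := Finset.mem_image.mp h
      · exact ⟨j, (Finset.mem_erase.mp hj).1, Or.inl rfl⟩
      · exact ⟨j, (Finset.mem_erase.mp hj).1, Or.inr rfl⟩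
    · rintro ⟨j, hj, rfl | rfl⟩
      · exact Finset.mem_union_left _ (Finset.mem_image.mpr
          ⟨j, Finset.mem_erase.mpr ⟨hj, Finset.mem_univ j⟩, rfl⟩)
      · exact Finset.mem_union_right _ (Finset.mem_image.mpr
          ⟨j, Finset.mem_erase.mpr ⟨hj, Finset.mem_univ j⟩, rfl⟩)
  refine ⟨?_, ?_, ?_⟩
  · -- cardinality
    have hinjA : Set.InjOn (hadamardSetA m H) (Finset.univ.erase c) := by
      intro j hj k hk heq
      by_contra hjk
      have hj' : j ≠ c := (Finset.mem_erase.mp hj).1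
      have hk' : k ≠ c := (Finset.mem_erase.mp hk).1
      have h1 := congrArg Finset.card (congrArg (· ∩ hadamardSetA m H k) heq)
      simp only [Finset.inter_self] at h1
      rw [hiAA j k hj' hk' hjk, hcardA k hk'] at h1
      omega
    have hinjB : Set.InjOn (hadamardSetB m H) (Finset.univ.erase c) := by
      intro j hj k hk heq
      by_contra hjk
      have hj' : j ≠ c := (Finset.mem_erase.mp hj).1
      have hk' : k ≠ c := (Finset.mem_erase.mp hk).1
      have h1 := congrArg Finset.card (congrArg (· ∩ hadamardSetB m H k) heq)
      simp only [Finset.inter_self] at h1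
      rw [hiBB j k hj' hk' hjk, hcardB k hk'] at h1
      omega
    have hdisj : Disjoint ((Finset.univ.erase c).image (hadamardSetA m H))
        ((Finset.univ.erase c).image (hadamardSetB m H)) := by
      rw [Finset.disjoint_left]
      intro X hX hX'
      obtain ⟨j, hj, rfl⟩ := Finset.mem_image.mp hX
      obtain ⟨k, hk, heq⟩ := Finset.mem_image.mp hX'
      exact hneAB j k (Finset.mem_erase.mp hj).1 (Finset.mem_erase.mp hk).1 heq.symm
    rw [hF, Finset.card_union_of_disjoint hdisj, Finset.card_image_of_injOn hinjA,
      Finset.card_image_of_injOn hinjB, Finset.card_erase_of_mem (Finset.mem_univ c),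
      Finset.card_univ, Fintype.card_fin]
    omega
  · -- odd
    intro X hX
    obtain ⟨j, hj, rfl | rfl⟩ := (hmemF X).mp hX
    · rw [hcardA j hj]; exact ⟨2 * s + 1, by ring⟩
    · rw [hcardB j hj]; exact ⟨2 * s + 1, by ring⟩
  · -- defect
    intro X hX
    obtain ⟨j, hj, rfl | rfl⟩ := (hmemF X).mp hX
    · rw [Finset.card_eq_one]
      refine ⟨hadamardSetB m H j, ?_⟩
      rw [Finset.eq_singleton_iff_unique_mem]
      constructor
      · rw [Finset.mem_filter, Finset.mem_erase]
        refine ⟨⟨Ne.symm (hneAB j j hj hj), (hmemF _).mpr ⟨j, hj, Or.inr rfl⟩⟩, ?_⟩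
        rw [hiABsame j]
        exact odd_one
      · intro Y hY
        rw [Finset.mem_filter, Finset.mem_erase] at hY
        obtain ⟨⟨hYne, hYF⟩, hodd⟩ := hY
        obtain ⟨k, hk, rfl | rfl⟩ := (hmemF Y).mp hYF
        · by_cases hjk : j = k
          · subst hjk; exact absurd rfl hYne
          · rw [hiAA j k hj hk hjk, Nat.odd_iff] at hodd; omega
        · by_cases hjk : j = k
          · subst hjk; rfl
          · rw [hiAB j k hj hk hjk, Nat.odd_iff] at hodd; omega
    · rw [Finset.card_eq_one]
      refine ⟨hadamardSetA m H j, ?_⟩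
      rw [Finset.eq_singleton_iff_unique_mem]
      constructor
      · rw [Finset.mem_filter, Finset.mem_erase]
        refine ⟨⟨hneAB j j hj hj, (hmemF _).mpr ⟨j, hj, Or.inl rfl⟩⟩, ?_⟩
        rw [hiBAsame j]
        exact odd_one
      · intro Y hY
        rw [Finset.mem_filter, Finset.mem_erase] at hY
        obtain ⟨⟨hYne, hYF⟩, hodd⟩ := hY
        obtain ⟨k, hk, rfl | rfl⟩ := (hmemF Y).mp hYF
        · by_cases hjk : j = k
          · subst hjk; rfl
          · rw [hiBA j k hj hk hjk, Nat.odd_iff] at hodd; omega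
        · by_cases hjk : j = k
          · subst hjk; exact absurd rfl hYne
          · rw [hiBB j k hj hk hjk, Nat.odd_iff] at hodd; omega
end

section
/- Let ℓ be a prime, d ≥ 0, and let A be a d-defect ℓ-oddtown on [n]. Then |A| ≤ (d+1)·n. -/
open Finset

lemma oddtown_bound (ℓ n : ℕ) (hℓ : ℓ.Prime) (S : Finset (Finset (Fin n)))
    (h1 : ∀ A ∈ S, ¬ ℓ ∣ A.card)
    (h2 : ∀ A ∈ S, ∀ B ∈ S, A ≠ B → ℓ ∣ (A ∩ B).card) : S.card ≤ n := by
  haveI : Fact ℓ.Prime := ⟨hℓ⟩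
  set v : Finset (Fin n) → (Fin n → ZMod ℓ) := fun A i => if i ∈ A then 1 else 0 with hv
  have key : ∀ A B : Finset (Fin n), ∑ i, v A i * v B i = ((A ∩ B).card : ZMod ℓ) := by
    intro A B
    have step : ∀ i : Fin n, v A i * v B i = if i ∈ A ∩ B then (1 : ZMod ℓ) else 0 := by
      intro i
      simp only [hv, Finset.mem_inter]
      by_cases hA : i ∈ A <;> by_cases hB : i ∈ B <;> simp [hA, hB]
    rw [Finset.sum_congr rfl fun i _ => step i, Finset.sum_boole]
    congr 1
    rw [Finset.filter_mem_eq_inter, Finset.univ_inter]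
  have li : LinearIndependent (ZMod ℓ) (fun A : S => v A) := by
    rw [linearIndependent_iff']
    intro s g hsum B hB
    have h0 : ∑ i, (∑ a ∈ s, g a • v (a : Finset (Fin n))) i * v (B : Finset (Fin n)) i = 0 := by
      rw [hsum]; simp
    have h1' : ∑ a ∈ s, g a * (((a : Finset (Fin n)) ∩ (B : Finset (Fin n))).card : ZMod ℓ) = 0 := by
      rw [← h0]
      simp only [Finset.sum_apply, Pi.smul_apply, smul_eq_mul, Finset.sum_mul]
      rw [Finset.sum_comm]
      refine Finset.sum_congr rfl fun a _ => ?_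
      rw [← key, Finset.mul_sum]
      refine Finset.sum_congr rfl fun i _ => by ring
    rw [Finset.sum_eq_single B] at h1'
    · have hcard : (((B : Finset (Fin n)).card : ZMod ℓ)) ≠ 0 := by
        rw [Ne, ZMod.natCast_eq_zero_iff]
        exact h1 B B.2
      have : ((B : Finset (Fin n)) ∩ (B : Finset (Fin n))) = (B : Finset (Fin n)) := Finset.inter_self _
      rw [this] at h1'
      exact (mul_eq_zero.mp h1').resolve_right hcard
    · intro a _ hne
      have : ℓ ∣ ((a : Finset (Fin n)) ∩ (B : Finset (Fin n))).card :=
        h2 a a.2 B B.2 (fun h => hne (Subtype.ext h))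
      rw [(ZMod.natCast_eq_zero_iff _ _).mpr this, mul_zero]
    · intro h; exact absurd hB h
  have := li.fintype_card_le_finrank
  simpa [Module.finrank_pi] using this

lemma greedy_extract (ℓ d n : ℕ) :
    ∀ (𝒜 : Finset (Finset (Fin n))),
      (∀ A ∈ 𝒜, ((𝒜.erase A).filter fun B => ¬ ℓ ∣ (A ∩ B).card).card ≤ d) →
      ∃ S ⊆ 𝒜, 𝒜.card ≤ (d + 1) * S.card ∧
        ∀ A ∈ S, ∀ B ∈ S, A ≠ B → ℓ ∣ (A ∩ B).card := by
  intro 𝒜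
  induction 𝒜 using Finset.strongInduction with
  | _ 𝒜 ih =>
    intro hdef
    rcases Finset.eq_empty_or_nonempty 𝒜 with rfl | ⟨A, hA⟩
    · exact ⟨∅, Finset.Subset.refl _, by simp, by simp⟩
    · set N := (𝒜.erase A).filter fun B => ¬ ℓ ∣ (A ∩ B).card with hN
      set 𝒜' := 𝒜 \ insert A N with h𝒜'
      have hsub : 𝒜' ⊆ 𝒜 := Finset.sdiff_subset
      have hssub : 𝒜' ⊂ 𝒜 := by
        refine Finset.ssubset_iff_of_subset hsub |>.mpr ⟨A, hA, ?_⟩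
        simp [h𝒜']
      have hdef' : ∀ B ∈ 𝒜', ((𝒜'.erase B).filter fun C => ¬ ℓ ∣ (B ∩ C).card).card ≤ d := by
        intro B hB
        refine le_trans (Finset.card_le_card ?_) (hdef B (hsub hB))
        exact Finset.filter_subset_filter _ (Finset.erase_subset_erase _ hsub)
      obtain ⟨S', hS'sub, hS'card, hS'pair⟩ := ih 𝒜' hssub hdef'
      have hAnotS' : A ∉ S' := fun h => by
        have := hS'sub h
        simp [h𝒜'] at this
      refine ⟨insert A S', ?_, ?_, ?_⟩
      · intro x hx
        rcases Finset.mem_insert.mp hx with rfl | hx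
        · exact hA
        · exact hsub (hS'sub hx)
      · have hNcard : (insert A N).card ≤ d + 1 := by
          refine le_trans (Finset.card_insert_le _ _) ?_
          exact Nat.succ_le_succ (hdef A hA)
        have hsplit : 𝒜.card ≤ 𝒜'.card + (insert A N).card := by
          have : 𝒜 ⊆ 𝒜' ∪ insert A N := by
            intro x hx
            by_cases h : x ∈ insert A N
            · exact Finset.mem_union_right _ h
            · exact Finset.mem_union_left _ (Finset.mem_sdiff.mpr ⟨hx, h⟩)
          calc 𝒜.card ≤ (𝒜' ∪ insert A N).card := Finset.card_le_card this
            _ ≤ 𝒜'.card + (insert A N).card := Finset.card_union_le _ _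
        rw [Finset.card_insert_of_notMem hAnotS', Nat.mul_succ]
        omega
      · intro X hX Y hY hXY
        have aux : ∀ B ∈ S', ℓ ∣ (A ∩ B).card := by
          intro B hB
          have hB' := hS'sub hB
          rw [h𝒜', Finset.mem_sdiff] at hB'
          obtain ⟨hBmem, hBnot⟩ := hB'
          by_contra hc
          apply hBnot
          refine Finset.mem_insert_of_mem ?_
          rw [hN, Finset.mem_filter]
          exact ⟨Finset.mem_erase.mpr ⟨fun h => hBnot (h ▸ Finset.mem_insert_self _ _), hBmem⟩, hc⟩
        rcases Finset.mem_insert.mp hX with rfl | hX'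
        · rcases Finset.mem_insert.mp hY with rfl | hY'
          · exact absurd rfl hXY
          · exact aux Y hY'
        · rcases Finset.mem_insert.mp hY with rfl | hY'
          · rw [Finset.inter_comm]; exact aux X hX'
          · exact hS'pair X hX' Y hY' hXY

/-- A d-defect ℓ-oddtown in [n] has size at most (d+1)n, for ℓ prime. -/
theorem d_defect_ell_oddtown_simple_bound (ℓ n d : ℕ) (hℓ : ℓ.Prime)
    (𝒜 : Finset (Finset (Fin n)))
    (hsize : ∀ A ∈ 𝒜, ¬ ℓ ∣ A.card)
    (hdefect : ∀ A ∈ 𝒜, ((𝒜.erase A).filter fun B => ¬ ℓ ∣ (A ∩ B).card).card ≤ d) :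
    𝒜.card ≤ (d + 1) * n := by
  obtain ⟨S, hSsub, hScard, hSpair⟩ := greedy_extract ℓ d n 𝒜 hdefect
  have hSn : S.card ≤ n := oddtown_bound ℓ n hℓ S (fun A hA => hsize A (hSsub hA)) hSpair
  calc 𝒜.card ≤ (d + 1) * S.card := hScard
    _ ≤ (d + 1) * n := Nat.mul_le_mul_left _ hSn
end

section
/- Let ℓ ≥ 2, d ≥ 0, and n ≥ ℓ⌈log₂(d+1)⌉. Set t = ⌈log₂(d+1)⌉ and s = ℓt. Let B_1, ..., B_t be disjoint subsets of [s] each of size ℓ, let S be a collection of d+1 distinct subsets of [t], and for S ∈ S let B_S = ∪_{i∈S} B_i. Then the family A = {B_S ∪ {i} : S ∈ S, i ∈ [n] \ [s]} is a d-defect ℓ-oddtown of size (d+1)(n − s). -/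
/-- Vu's construction of a d-defect ℓ-oddtown of size (d+1)(n - s), s = ℓ⌈log₂(d+1)⌉. -/
theorem d_defect_construction (ℓ d n t s : ℕ) (hℓ : 2 ≤ ℓ)
    (ht : t = Nat.clog 2 (d + 1)) (hs : s = ℓ * t) (hn : s ≤ n)
    (B : Fin t → Finset (Fin n))
    (hdisj : ∀ i j, i ≠ j → Disjoint (B i) (B j))
    (hcard : ∀ i, (B i).card = ℓ)
    (hsub : ∀ i, ∀ x ∈ B i, (x : ℕ) < s)
    (𝒮 : Finset (Finset (Fin t))) (h𝒮 : 𝒮.card = d + 1) :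
    (Finset.image (fun p : Finset (Fin t) × Fin n => insert p.2 (p.1.sup B))
        (𝒮 ×ˢ (Finset.univ.filter fun i : Fin n => s ≤ (i : ℕ)))).card = (d + 1) * (n - s) ∧
    (∀ X ∈ Finset.image (fun p : Finset (Fin t) × Fin n => insert p.2 (p.1.sup B))
        (𝒮 ×ˢ (Finset.univ.filter fun i : Fin n => s ≤ (i : ℕ))), ¬ ℓ ∣ X.card) ∧
    (∀ X ∈ Finset.image (fun p : Finset (Fin t) × Fin n => insert p.2 (p.1.sup B))
        (𝒮 ×ˢ (Finset.univ.filter fun i : Fin n => s ≤ (i : ℕ))),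
      (((Finset.image (fun p : Finset (Fin t) × Fin n => insert p.2 (p.1.sup B))
          (𝒮 ×ˢ (Finset.univ.filter fun i : Fin n => s ≤ (i : ℕ)))).erase X).filter
        fun Y => ¬ ℓ ∣ (X ∩ Y).card).card ≤ d) := by
  clear ht hs
  -- basic facts about sups of the B's
  have hsuplt : ∀ (S : Finset (Fin t)), ∀ x ∈ S.sup B, (x : ℕ) < s := by
    intro S x hx
    obtain ⟨j, _, hj⟩ := Finset.mem_sup.1 hx
    exact hsub j x hj
  have hnotmem : ∀ (S : Finset (Fin t)) (i : Fin n), s ≤ (i : ℕ) → i ∉ S.sup B := by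
    intro S i hi hmem
    exact absurd (hsuplt S i hmem) (by omega)
  have hsupcard : ∀ S : Finset (Fin t), (S.sup B).card = ℓ * S.card := by
    intro S
    rw [Finset.sup_eq_biUnion, Finset.card_biUnion (fun i _ j _ h => hdisj i j h)]
    simp [hcard, mul_comm]
  have hsame : ∀ j k : Fin t, ∀ x : Fin n, x ∈ B j → x ∈ B k → j = k := by
    intro j k x hxj hxk
    by_contra hne
    exact Finset.disjoint_left.1 (hdisj j k hne) hxj hxk
  have hsupinter : ∀ S S' : Finset (Fin t), S.sup B ∩ S'.sup B = (S ∩ S').sup B := by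
    intro S S'
    ext x
    simp only [Finset.mem_inter, Finset.mem_sup]
    constructor
    · rintro ⟨⟨j, hjS, hxj⟩, ⟨k, hkS, hxk⟩⟩
      obtain rfl := hsame j k x hxj hxk
      exact ⟨j, ⟨hjS, hkS⟩, hxj⟩
    · rintro ⟨j, ⟨h1, h2⟩, hxj⟩
      exact ⟨⟨j, h1, hxj⟩, ⟨j, h2, hxj⟩⟩
  have hsupinj : ∀ S S' : Finset (Fin t), S.sup B = S'.sup B → S = S' := by
    have key : ∀ S S' : Finset (Fin t), S.sup B = S'.sup B → S ⊆ S' := by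
      intro S S' h j hj
      obtain ⟨x, hx⟩ : (B j).Nonempty := Finset.card_pos.1 (by rw [hcard]; omega)
      have hx' : x ∈ S'.sup B := h ▸ Finset.mem_sup.2 ⟨j, hj, hx⟩
      obtain ⟨k, hk, hxk⟩ := Finset.mem_sup.1 hx'
      exact (hsame j k x hx hxk) ▸ hk
    exact fun S S' h => Finset.Subset.antisymm (key S S' h) (key S' S h.symm)
  set filt : Finset (Fin n) := Finset.univ.filter fun i : Fin n => s ≤ (i : ℕ) with hfilt
  -- injectivity of the construction on the product
  have hinj : Set.InjOn (fun p : Finset (Fin t) × Fin n => insert p.2 (p.1.sup B))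
      ↑(𝒮 ×ˢ filt) := by
    rintro ⟨S, i⟩ hp ⟨S', i'⟩ hq h
    simp only [hfilt, Finset.mem_coe, Finset.mem_product, Finset.mem_filter, Finset.mem_univ,
      true_and] at hp hq
    have hi : s ≤ (i : ℕ) := hp.2
    have hi' : s ≤ (i' : ℕ) := hq.2
    simp only at h
    have hii' : i = i' := by
      have : i ∈ insert i' (S'.sup B) := h ▸ Finset.mem_insert_self i (S.sup B)
      rcases Finset.mem_insert.1 this with h1 | h1
      · exact h1
      · exact absurd h1 (hnotmem S' i hi)
    subst hii'
    have : S.sup B = S'.sup B := by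
      have e1 := Finset.erase_insert (hnotmem S i hi)
      have e2 := Finset.erase_insert (hnotmem S' i hi')
      rw [← e1, ← e2, h]
    rw [hsupinj S S' this]
  have hfiltcard : filt.card = n - s := by
    have himg : filt.image Fin.val = Finset.Ico s n := by
      ext x
      simp only [hfilt, Finset.mem_image, Finset.mem_filter, Finset.mem_univ, true_and,
        Finset.mem_Ico]
      constructor
      · rintro ⟨i, hi, rfl⟩; exact ⟨hi, i.isLt⟩
      · rintro ⟨h1, h2⟩; exact ⟨⟨x, h2⟩, h1, rfl⟩
    have := Finset.card_image_of_injective filt Fin.val_injective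
    rw [himg, Nat.card_Ico] at this
    omega
  refine ⟨?_, ?_, ?_⟩
  · rw [Finset.card_image_of_injOn hinj, Finset.card_product, h𝒮, hfiltcard]
  · intro X hX
    obtain ⟨⟨S, i⟩, hp, rfl⟩ := Finset.mem_image.1 hX
    simp only [hfilt, Finset.mem_product, Finset.mem_filter, Finset.mem_univ, true_and] at hp
    have hni : i ∉ S.sup B := hnotmem S i hp.2
    rw [Finset.card_insert_of_notMem hni, hsupcard]
    intro hdvd
    have h1 : ℓ ∣ 1 := (Nat.dvd_add_right (dvd_mul_right ℓ S.card)).mp hdvd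
    have := Nat.le_of_dvd one_pos h1
    omega
  · intro X hX
    obtain ⟨⟨S, i⟩, hp, rfl⟩ := Finset.mem_image.1 hX
    simp only [hfilt, Finset.mem_product, Finset.mem_filter, Finset.mem_univ, true_and] at hp
    have hi : s ≤ (i : ℕ) := hp.2
    have hsubim : ((Finset.image (fun p : Finset (Fin t) × Fin n => insert p.2 (p.1.sup B))
          (𝒮 ×ˢ filt)).erase (insert i (S.sup B))).filter
        (fun Y => ¬ ℓ ∣ ((insert i (S.sup B)) ∩ Y).card) ⊆
        (𝒮.erase S).image (fun S' => insert i (S'.sup B)) := by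
      intro Y hY
      obtain ⟨hY1, hY2⟩ := Finset.mem_filter.1 hY
      have hYne : Y ≠ insert i (S.sup B) := Finset.ne_of_mem_erase hY1
      obtain ⟨⟨S', i'⟩, hq, rfl⟩ := Finset.mem_image.1 (Finset.mem_of_mem_erase hY1)
      simp only [hfilt, Finset.mem_product, Finset.mem_filter, Finset.mem_univ, true_and] at hq
      have hi' : s ≤ (i' : ℕ) := hq.2
      have hii' : i = i' := by
        by_contra hne
        apply hY2
        have hint : insert i (S.sup B) ∩ insert i' (S'.sup B) = (S ∩ S').sup B := by
          rw [← hsupinter]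
          ext x
          simp only [Finset.mem_inter, Finset.mem_insert]
          constructor
          · rintro ⟨h1 | h1, h2 | h2⟩
            · exact absurd (h1 ▸ h2) hne
            · exact absurd (h1 ▸ h2) (hnotmem S' i hi)
            · exact absurd (h2 ▸ h1) (hnotmem S i' hi')
            · exact ⟨h1, h2⟩
          · rintro ⟨h1, h2⟩; exact ⟨Or.inr h1, Or.inr h2⟩
        rw [hint, hsupcard]
        exact dvd_mul_right ℓ _
      subst hii'
      have hS' : S' ≠ S := by
        rintro rfl; exact hYne rfl
      exact Finset.mem_image.2 ⟨S', Finset.mem_erase.2 ⟨hS', hq.1⟩, rfl⟩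
    calc _ ≤ ((𝒮.erase S).image (fun S' => insert i (S'.sup B))).card :=
          Finset.card_le_card hsubim
      _ ≤ (𝒮.erase S).card := Finset.card_image_le
      _ = d := by rw [Finset.card_erase_of_mem hp.1, h𝒮]; omega
end

section
/- Let r ≥ 0. Define families A^r of 2^(r+1) subsets of [2^r] recursively by: A^0 = {∅, {1}}; and for r > 0, with A^{r−1} = {A_1, ..., A_{2^r}}, set A_i^r = A_i ∪ (A_i + 2^{r−1}) for 1 ≤ i ≤ 2^r and A_{i+2^r}^r = A_i ∪ (([2^{r−1}] \ A_i) + 2^{r−1}). Then for every subset S ⊆ [2^{r+1}] with |S| ≤ r, the cardinality of ∩_{i∈S} A_i^r is divisible by 2^{r−|S|}. -/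
/-- The recursive family A^r of 2^(r+1) subsets of [2^r]: A^0 = {∅, {1}}, and A^r is built
from A^(r-1) by doubling and complement-doubling on the shifted copy of the universe. -/
def recFam : ℕ → List (Finset ℕ)
  | 0 => [∅, {1}]
  | (r + 1) =>
      ((recFam r).map fun A => A ∪ A.image (· + 2 ^ r)) ++
      ((recFam r).map fun A => A ∪ ((Finset.Icc 1 (2 ^ r) \ A).image (· + 2 ^ r)))

/-!
Index the members of `A^r` from `0`. Writing `i = 2a + b` with `b < 2`, and reading `a` and
`y < 2^r` as vectors of `𝔽₂^r` through their binary digits, the member `A_i` is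
`{y + 1 : ⟨a, y⟩ = 1 + b}`. An intersection of `|S|` members is thus the solution set of `|S|`
affine equations over `𝔽₂` in `r` unknowns: empty, or a coset of a subspace of dimension at least
`r - |S|`.
-/

open Finset Matrix

theorem LinearMap.pow_sub_finrank_dvd_card_fiber {K V W : Type*} [Field K] [Fintype K]
    [AddCommGroup V] [Module K V] [Fintype V] [AddCommGroup W] [Module K W]
    [FiniteDimensional K W] [DecidableEq W] (f : V →ₗ[K] W) (w : W) :
    Fintype.card K ^ (Module.finrank K V - Module.finrank K W) ∣ #{v | f v = w} := by
  classical
  by_cases hw : w ∈ Set.range f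
  · rw [AddMonoidHom.card_fiber_eq_of_mem_range f hw ⟨0, map_zero f⟩]
    have hker : #{v | f v = 0} = Fintype.card K ^ Module.finrank K (ker f) := by
      rw [← Module.card_eq_pow_finrank, Fintype.card_subtype]
      simp only [LinearMap.mem_ker]
    rw [hker]
    apply pow_dvd_pow
    have := f.finrank_range_add_finrank_ker
    have := f.range.finrank_le
    omega
  · rw [filter_false_of_mem fun v _ hv => hw ⟨v, hv⟩, card_empty]
    exact dvd_zero _

def binaryVector (r n : ℕ) : Fin r → ZMod 2 := fun k => ((n / 2 ^ (k : ℕ) : ℕ) : ZMod 2)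

theorem binaryVector_eq_finFunctionFinEquiv_symm {r n : ℕ} (hn : n < 2 ^ r) :
    binaryVector r n = finFunctionFinEquiv.symm ⟨n, hn⟩ := by
  funext k
  apply ZMod.val_injective
  rw [binaryVector, ZMod.val_natCast]
  exact (finFunctionFinEquiv_symm_apply_val (m := 2) ⟨n, hn⟩ k).symm

theorem binaryVector_finFunctionFinEquiv {r : ℕ} (v : Fin r → ZMod 2) :
    binaryVector r (finFunctionFinEquiv v) = v :=
  (binaryVector_eq_finFunctionFinEquiv_symm _).trans (finFunctionFinEquiv.symm_apply_apply v)

theorem dotProduct_binaryVector_succ (r a y : ℕ) :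
    binaryVector (r + 1) a ⬝ᵥ binaryVector (r + 1) y =
      binaryVector r a ⬝ᵥ binaryVector r y +
        ((a / 2 ^ r : ℕ) : ZMod 2) * ((y / 2 ^ r : ℕ) : ZMod 2) :=
  Fin.sum_univ_castSucc _

theorem binaryVector_add_two_pow (r n : ℕ) : binaryVector r (n + 2 ^ r) = binaryVector r n := by
  funext k
  have hk : (k : ℕ) < r := k.isLt
  have hcarry : ((2 ^ (r - k) : ℕ) : ZMod 2) = 0 :=
    (ZMod.natCast_eq_zero_iff _ _).mpr (dvd_pow_self 2 (by omega))
  rw [binaryVector, binaryVector, add_comm, Nat.add_div_of_dvd_right (pow_dvd_pow 2 hk.le),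
    Nat.pow_div hk.le two_pos, Nat.cast_add, hcarry, zero_add]

theorem card_filter_dotProduct_binaryVector_dvd {ι : Type*} (r : ℕ) (S : Finset ι)
    (a : ι → Fin r → ZMod 2) (t : ι → ZMod 2) :
    2 ^ (r - #S) ∣ #{y ∈ range (2 ^ r) | ∀ i ∈ S, a i ⬝ᵥ binaryVector r y = t i} := by
  classical
  let M : Matrix S (Fin r) (ZMod 2) := fun i => a i
  have hsolve (v : Fin r → ZMod 2) :
      M.mulVecLin v = (fun i : S => t i) ↔ ∀ i ∈ S, a i ⬝ᵥ v = t i := by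
    simp only [funext_iff, Subtype.forall]
    rfl
  have hcard : #{y ∈ range (2 ^ r) | ∀ i ∈ S, a i ⬝ᵥ binaryVector r y = t i} =
      #{v | M.mulVecLin v = fun i : S => t i} := by
    refine card_nbij' (binaryVector r) (fun v => finFunctionFinEquiv v) ?_ ?_ ?_ ?_
    · intro y hy
      simp_all
    · intro v hv
      simp_all [binaryVector_finFunctionFinEquiv]
    · intro y hy
      simp only [coe_filter, mem_range] at hy
      simp [binaryVector_eq_finFunctionFinEquiv_symm hy.1]
    · intro v _
      exact binaryVector_finFunctionFinEquiv v
  rw [hcard]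
  simpa using M.mulVecLin.pow_sub_finrank_dvd_card_fiber (fun i : S => t i)

theorem union_image_add_subset_Icc {N : ℕ} {A B : Finset ℕ} (hA : A ⊆ Icc 1 N)
    (hB : B ⊆ Icc 1 N) : A ∪ B.image (· + N) ⊆ Icc 1 (N + N) := by
  intro x hx
  rcases mem_union.mp hx with hx | hx
  · have := mem_Icc.mp (hA hx)
    exact mem_Icc.mpr (by omega)
  · obtain ⟨b, hb, rfl⟩ := mem_image.mp hx
    have := mem_Icc.mp (hB hb)
    exact mem_Icc.mpr (by omega)

theorem add_one_mem_union_image_add_iff {N z : ℕ} {A B : Finset ℕ} (hB : B ⊆ Icc 1 N)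
    (hz : z < N) : z + 1 ∈ A ∪ B.image (· + N) ↔ z + 1 ∈ A := by
  refine ⟨fun h => (mem_union.mp h).resolve_right fun h' => ?_, mem_union_left _⟩
  obtain ⟨b, hb, hbz⟩ := mem_image.mp h'
  have := mem_Icc.mp (hB hb)
  omega

theorem add_add_one_mem_union_image_add_iff {N z : ℕ} {A B : Finset ℕ} (hA : A ⊆ Icc 1 N) :
    z + N + 1 ∈ A ∪ B.image (· + N) ↔ z + 1 ∈ B := by
  have hzA : z + N + 1 ∉ A := fun h => by have := mem_Icc.mp (hA h); omega
  simp only [mem_union, hzA, false_or, mem_image]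
  exact ⟨fun ⟨b, hb, hbz⟩ => by rwa [show z + 1 = b by omega], fun h => ⟨z + 1, h, by omega⟩⟩

theorem recFam_length (r : ℕ) : (recFam r).length = 2 ^ (r + 1) := by
  induction r with
  | zero => rfl
  | succ r ih => simp only [recFam, List.length_append, List.length_map, ih, pow_succ]; ring

theorem recFam_subset (r : ℕ) : ∀ A ∈ recFam r, A ⊆ Icc 1 (2 ^ r) := by
  induction r with
  | zero => simp [recFam]
  | succ r ih =>
    simp only [recFam, List.mem_append, List.mem_map, pow_succ, mul_two]
    rintro _ (⟨A, hA, rfl⟩ | ⟨A, hA, rfl⟩)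
    · exact union_image_add_subset_Icc (ih A hA) (ih A hA)
    · exact union_image_add_subset_Icc (ih A hA) sdiff_subset

theorem getD_recFam_subset (r i : ℕ) : (recFam r).getD i ∅ ⊆ Icc 1 (2 ^ r) := by
  rw [List.getD_eq_getElem?_getD]
  cases h : (recFam r)[i]? with
  | none => exact empty_subset _
  | some A => exact recFam_subset r A (List.mem_of_getElem? h)

theorem getD_recFam_succ_of_lt {r i : ℕ} (hi : i < 2 ^ (r + 1)) :
    (recFam (r + 1)).getD i ∅ =
      (recFam r).getD i ∅ ∪ ((recFam r).getD i ∅).image (· + 2 ^ r) := by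
  simp [recFam, List.getD_eq_getElem?_getD, List.getElem?_append_left, recFam_length, hi]

theorem getD_recFam_succ_add {r j : ℕ} (hj : j < 2 ^ (r + 1)) :
    (recFam (r + 1)).getD (j + 2 ^ (r + 1)) ∅ =
      (recFam r).getD j ∅ ∪ (Icc 1 (2 ^ r) \ (recFam r).getD j ∅).image (· + 2 ^ r) := by
  simp [recFam, List.getD_eq_getElem?_getD, recFam_length, hj]

theorem ZMod.two_add_one_eq_iff_ne (x y : ZMod 2) : x + 1 = y ↔ x ≠ y := by
  revert x y; decide

theorem add_two_pow_div_two_pow {n r : ℕ} (hn : n < 2 ^ r) : (n + 2 ^ r) / 2 ^ r = 1 := by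
  rw [Nat.add_div_right _ (by positivity), Nat.div_eq_of_lt hn]

theorem add_one_mem_getD_recFam_iff {r i y : ℕ} (hi : i < 2 ^ (r + 1)) (hy : y < 2 ^ r) :
    y + 1 ∈ (recFam r).getD i ∅ ↔ binaryVector r (i / 2) ⬝ᵥ binaryVector r y = 1 + i := by
  induction r generalizing i y with
  | zero =>
    obtain rfl : y = 0 := by omega
    interval_cases i <;> decide
  | succ r ih =>
    have hpow : 2 ^ (r + 1) = 2 * 2 ^ r := pow_succ' 2 r
    rw [dotProduct_binaryVector_succ]
    rcases lt_or_ge i (2 ^ (r + 1)) with hi' | hi'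
    · have hsub := getD_recFam_subset r i
      rw [getD_recFam_succ_of_lt hi', Nat.div_eq_of_lt (show i / 2 < 2 ^ r by omega), Nat.cast_zero,
        zero_mul, add_zero]
      rcases lt_or_ge y (2 ^ r) with hy' | hy'
      · rw [add_one_mem_union_image_add_iff hsub hy']
        exact ih hi' hy'
      · obtain ⟨z, rfl⟩ := Nat.exists_eq_add_of_le' hy'
        rw [add_add_one_mem_union_image_add_iff hsub, binaryVector_add_two_pow]
        exact ih hi' (by omega)
    · obtain ⟨j, rfl⟩ := Nat.exists_eq_add_of_le' hi'
      have hj : j < 2 ^ (r + 1) := by omega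
      have hsub := getD_recFam_subset r j
      have hcast : ((j + 2 ^ (r + 1) : ℕ) : ZMod 2) = j := by
        rw [Nat.cast_add, (ZMod.natCast_eq_zero_iff _ _).mpr (dvd_pow_self 2 r.succ_ne_zero),
          add_zero]
      rw [getD_recFam_succ_add hj, show (j + 2 ^ (r + 1)) / 2 = j / 2 + 2 ^ r by omega,
        add_two_pow_div_two_pow (show j / 2 < 2 ^ r by omega), binaryVector_add_two_pow, hcast,
        Nat.cast_one, one_mul]
      rcases lt_or_ge y (2 ^ r) with hy' | hy'
      · rw [add_one_mem_union_image_add_iff sdiff_subset hy', Nat.div_eq_of_lt hy', Nat.cast_zero,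
          add_zero]
        exact ih hj hy'
      · obtain ⟨z, rfl⟩ := Nat.exists_eq_add_of_le' hy'
        have hz : z < 2 ^ r := by omega
        rw [add_add_one_mem_union_image_add_iff hsub, binaryVector_add_two_pow,
          add_two_pow_div_two_pow hz, Nat.cast_one, ZMod.two_add_one_eq_iff_ne, ne_eq, ← ih hj hz,
          mem_sdiff, and_iff_right (mem_Icc.mpr ⟨by omega, by omega⟩)]

theorem recFam_divisibility_general (r : ℕ) (S : Finset ℕ) (hS : S ⊆ Finset.range (2 ^ (r + 1))) :
    2 ^ (r - S.card) ∣
      ((Finset.Icc 1 (2 ^ r)).filter fun x => ∀ i ∈ S, x ∈ (recFam r).getD i ∅).card := by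
  have hIcc : Icc 1 (2 ^ r) = (range (2 ^ r)).map (addRightEmbedding 1) := by
    ext x
    simp only [mem_Icc, mem_map, mem_range, addRightEmbedding_apply]
    exact ⟨fun h => ⟨x - 1, by omega, by omega⟩, by rintro ⟨y, hy, rfl⟩; omega⟩
  rw [hIcc, filter_map, card_map]
  convert card_filter_dotProduct_binaryVector_dvd r S (fun i => binaryVector r (i / 2))
    (fun i => 1 + i) using 2
  refine filter_congr fun y hy => forall₂_congr fun i hi => ?_
  exact add_one_mem_getD_recFam_iff (mem_range.mp (hS hi)) (mem_range.mp hy)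

/-- Every intersection of |S| ≤ r members of A^r (interpreted inside the universe
[2^r], so that the empty intersection is [2^r]) has size divisible by 2^(r - |S|). -/
theorem recFam_divisibility (r : ℕ) (S : Finset ℕ) (hS : S ⊆ Finset.range (2 ^ (r + 1)))
    (hcard : S.card ≤ r) :
    2 ^ (r - S.card) ∣
      ((Finset.Icc 1 (2 ^ r)).filter fun x => ∀ i ∈ S, x ∈ (recFam r).getD i ∅).card :=
  recFam_divisibility_general r S hS
end
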